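/- arXiv:2208.12478 — 5 statements merged into one kernel-verified Lean document; each statement's English description precedes it below -/
import Mathlib

section
/- The metaplectic cocycle σ: G × G → μ_2 defined by σ(g₁,g₂) = (c(g₁g₂)/c(g₁), (c(g₁g₂)/c(g₂))·det(g₁)), where c((a b; c d)) = c if c ≠ 0 and d otherwise, is trivial when restricted to the subgroup B₂ of upper triangular matrices whose diagonal entries lie in A = p^{2Z}Z_p^×; that is, σ(b₁,b₂) = 1 for all b₁, b₂ ∈ B₂. -/
open scoped Classical

noncomputable def unitPart (p : ℕ) [Fact p.Prime] (x : ℚ_[p]) : ℚ_[p] :=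
  x * (p : ℚ_[p]) ^ (-x.valuation)

noncomputable def omegaVal (p : ℕ) [Fact p.Prime] (x : ℚ_[p]) : ZMod p :=
  if h : ‖unitPart p x‖ ≤ 1 then PadicInt.toZMod (⟨unitPart p x, h⟩ : ℤ_[p]) else 0

/-- The Hilbert symbol `(a,b) = ω((-1)^{v(a)v(b)} b^{v(a)}/a^{v(b)})^{(p-1)/2}`. -/
noncomputable def hilbertFormula (p : ℕ) [Fact p.Prime] (a b : ℚ_[p]) : ZMod p :=
  omegaVal p ((-1 : ℚ_[p]) ^ (a.valuation * b.valuation) * b ^ a.valuation / a ^ b.valuation) ^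
    ((p - 1) / 2)

/-- The function `𝔠 : GL₂(ℚ_p) → ℚ_p^×`, `𝔠 (a b; c d) = c` if `c ≠ 0` and `= d` otherwise. -/
noncomputable def cfun (p : ℕ) [Fact p.Prime] (g : Matrix (Fin 2) (Fin 2) ℚ_[p]) : ℚ_[p] :=
  if g 1 0 ≠ 0 then g 1 0 else g 1 1

/-- The metaplectic cocycle
`σ(g₁,g₂) = (𝔠(g₁g₂)/𝔠(g₁), (𝔠(g₁g₂)/𝔠(g₂))·det(g₁))` valued in `μ₂ ⊆ F_p^×`. -/
noncomputable def metaCocycle (p : ℕ) [Fact p.Prime]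
    (g₁ g₂ : Matrix (Fin 2) (Fin 2) ℚ_[p]) : ZMod p :=
  hilbertFormula p (cfun p (g₁ * g₂) / cfun p g₁)
    (cfun p (g₁ * g₂) / cfun p g₂ * g₁.det)

/-!
For upper triangular `b₁, b₂` the function `𝔠` is the lower right entry, so
`σ(b₁,b₂) = (d₂, a₁d₁²)`. Both entries have even valuation, and for such `x, y` the argument
`(-1)^{v(x)v(y)} y^{v(x)}/x^{v(y)}` of `ω` is the square `u²` of the unit `u = y^{v(x)/2}/x^{v(y)/2}`;
hence the symbol is `ω(u)^{p-1} = 1` by Fermat's little theorem.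
-/

namespace Padic

variable {p : ℕ} [Fact p.Prime]

lemma norm_eq_one_of_valuation_eq_zero {x : ℚ_[p]} (hx : x ≠ 0) (hv : x.valuation = 0) :
    ‖x‖ = 1 := by
  rw [norm_eq_zpow_neg_valuation hx, hv, neg_zero, zpow_zero]

lemma omegaVal_of_valuation_eq_zero {x : ℚ_[p]} (hx : x ≠ 0) (hv : x.valuation = 0) :
    omegaVal p x = PadicInt.toZMod ⟨x, (norm_eq_one_of_valuation_eq_zero hx hv).le⟩ := by
  have hunit : unitPart p x = x := by rw [unitPart, hv, neg_zero, zpow_zero, mul_one]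
  simp only [omegaVal, hunit, (norm_eq_one_of_valuation_eq_zero hx hv).le, dif_pos]

lemma omegaVal_mul_self_pow_eq_one {u : ℚ_[p]} (hp : Odd p) (hu : u ≠ 0)
    (hv : u.valuation = 0) : omegaVal p (u * u) ^ ((p - 1) / 2) = 1 := by
  have huu : (u * u).valuation = 0 := by rw [valuation_mul hu hu, hv, add_zero]
  set z : ℤ_[p] := ⟨u, (norm_eq_one_of_valuation_eq_zero hu hv).le⟩
  have hz : omegaVal p (u * u) = PadicInt.toZMod z ^ 2 := by
    rw [omegaVal_of_valuation_eq_zero (mul_ne_zero hu hu) huu, sq, ← map_mul]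
    rfl
  have hz_ne : PadicInt.toZMod z ≠ 0 :=
    ((PadicInt.isUnit_iff.mpr (norm_eq_one_of_valuation_eq_zero hu hv)).map _).ne_zero
  have hexp : 2 * ((p - 1) / 2) = p - 1 := by obtain ⟨k, rfl⟩ := hp; omega
  rw [hz, ← pow_mul, hexp, ZMod.pow_card_sub_one_eq_one hz_ne]

lemma hilbertFormula_eq_one_of_even_valuation {x y : ℚ_[p]} (hp : Odd p) (hx : x ≠ 0)
    (hy : y ≠ 0) (hvx : Even x.valuation) (hvy : Even y.valuation) :
    hilbertFormula p x y = 1 := by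
  obtain ⟨m, hm⟩ := hvx
  obtain ⟨n, hn⟩ := hvy
  have hu : y ^ m / x ^ n ≠ 0 := div_ne_zero (zpow_ne_zero _ hy) (zpow_ne_zero _ hx)
  have hvu : (y ^ m / x ^ n).valuation = 0 := by
    rw [div_eq_mul_inv, valuation_mul (zpow_ne_zero _ hy) (inv_ne_zero (zpow_ne_zero _ hx)),
      valuation_inv, valuation_zpow, valuation_zpow, hm, hn]
    ring
  have hsq : (-1 : ℚ_[p]) ^ (x.valuation * y.valuation) * y ^ x.valuation / x ^ y.valuation
      = y ^ m / x ^ n * (y ^ m / x ^ n) := by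
    have hsign : (-1 : ℚ_[p]) ^ (x.valuation * y.valuation) = 1 :=
      Even.neg_one_zpow ⟨m * y.valuation, by rw [hm]; ring⟩
    rw [hsign, one_mul, hm, hn, zpow_add₀ hy, zpow_add₀ hx]
    field_simp
  rw [hilbertFormula, hsq]
  exact omegaVal_mul_self_pow_eq_one hp hu hvu

end Padic

section UpperTriangular

variable {p : ℕ} [Fact p.Prime] {b₁ b₂ : Matrix (Fin 2) (Fin 2) ℚ_[p]}

lemma cfun_of_apply_one_zero_eq_zero (h : b₁ 1 0 = 0) : cfun p b₁ = b₁ 1 1 := by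
  simp [cfun, h]

lemma metaCocycle_of_upperTriangular (hlow₁ : b₁ 1 0 = 0) (hlow₂ : b₂ 1 0 = 0)
    (hd₁ : b₁ 1 1 ≠ 0) (hd₂ : b₂ 1 1 ≠ 0) :
    metaCocycle p b₁ b₂ = hilbertFormula p (b₂ 1 1) (b₁ 0 0 * (b₁ 1 1 * b₁ 1 1)) := by
  have hlow : (b₁ * b₂) 1 0 = 0 := by simp [Matrix.mul_apply, hlow₁, hlow₂]
  have hdiag : (b₁ * b₂) 1 1 = b₁ 1 1 * b₂ 1 1 := by simp [Matrix.mul_apply, hlow₁]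
  have hdet : b₁.det = b₁ 0 0 * b₁ 1 1 := by rw [Matrix.det_fin_two, hlow₁]; ring
  rw [metaCocycle, cfun_of_apply_one_zero_eq_zero hlow, cfun_of_apply_one_zero_eq_zero hlow₁,
    cfun_of_apply_one_zero_eq_zero hlow₂, hdiag, hdet]
  congr 1 <;> field_simp

end UpperTriangular

theorem statement2_general (p : ℕ) [Fact p.Prime] (hp : Odd p)
    (b₁ b₂ : Matrix (Fin 2) (Fin 2) ℚ_[p])
    (hlow₁ : b₁ 1 0 = 0) (hlow₂ : b₂ 1 0 = 0)
    (ha₁ : b₁ 0 0 ≠ 0) (hd₁ : b₁ 1 1 ≠ 0) (hd₂ : b₂ 1 1 ≠ 0)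
    (hva₁ : Even (b₁ 0 0).valuation)
    (hvd₂ : Even (b₂ 1 1).valuation) :
    metaCocycle p b₁ b₂ = 1 := by
  have hd₁d₁ : b₁ 1 1 * b₁ 1 1 ≠ 0 := mul_ne_zero hd₁ hd₁
  rw [metaCocycle_of_upperTriangular hlow₁ hlow₂ hd₁ hd₂]
  refine Padic.hilbertFormula_eq_one_of_even_valuation hp hd₂ (mul_ne_zero ha₁ hd₁d₁) hvd₂ ?_
  rw [Padic.valuation_mul ha₁ hd₁d₁, Padic.valuation_mul hd₁ hd₁]
  exact hva₁.add ⟨_, rfl⟩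

/-- The metaplectic cocycle `σ` is trivial on the subgroup `B₂` of upper triangular matrices
whose diagonal entries lie in `A = p^{2ℤ}ℤ_p^×`: `σ(b₁,b₂) = 1` for all `b₁, b₂ ∈ B₂`. -/
theorem statement2 (p : ℕ) [Fact p.Prime] (hp : Odd p)
    (b₁ b₂ : Matrix (Fin 2) (Fin 2) ℚ_[p])
    (hlow₁ : b₁ 1 0 = 0) (hlow₂ : b₂ 1 0 = 0)
    (ha₁ : b₁ 0 0 ≠ 0) (hd₁ : b₁ 1 1 ≠ 0) (ha₂ : b₂ 0 0 ≠ 0) (hd₂ : b₂ 1 1 ≠ 0)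
    (hva₁ : Even (b₁ 0 0).valuation) (hvd₁ : Even (b₁ 1 1).valuation)
    (hva₂ : Even (b₂ 0 0).valuation) (hvd₂ : Even (b₂ 1 1).valuation) :
    metaCocycle p b₁ b₂ = 1 :=
  statement2_general p hp b₁ b₂ hlow₁ hlow₂ ha₁ hd₁ hd₂ hva₁ hvd₂
end

section
/- The center of the metaplectic cover T̃ of the diagonal torus T of GL₂(Q_p) is exactly T^sq × μ_2, where T^sq is the subgroup of squares in T. The center of G̃ is Z^sq × μ_2, where Z^sq is the group of scalar matrices with square entries. -/
/-!
On the torus the cocycle is `σ(diag(x, y), diag(x', y')) = (y', x y²)`, so `(diag(x, y), ζ)` is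
central in `T̃` iff `(y', x y²) = (y, x' y'²)` for all `x', y'`. Taking `(x', y') = (b, 1)` and
`(b⁻², b)` gives `(y, b) = (x y², b) = 1` for every `b`, so `y` and `x y²` are squares by
nondegeneracy of the Hilbert symbol. In `G̃`, commuting with all transvections makes `g = c • 1`,
and `σ(c • 1, diag(t, 1)) = 1`, `σ(diag(t, 1), c • 1) = (c, t)` give `(c, t) = 1` for all `t`.

Nondegeneracy: in the form `(a, b) = χ(-1)^{v(a)v(b)} χ(b)^{v(a)} χ(a)^{v(b)}`, with `χ` the
Legendre symbol of the residue of the unit part, pairing `a` with a nonsquare unit gives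
`(-1)^{v(a)}`, so `v(a)` is even; pairing with `p` then gives `χ(a)`, so the unit part of `a` is
a square mod `p`, and Hensel's lemma lifts its square root.
-/

open scoped Classical

/-- The Hilbert symbol viewed with values in `μ₂ = {±1} ⊆ ℤˣ`. -/
noncomputable def hilbertSign (p : ℕ) [Fact p.Prime] (a b : ℚ_[p]) : ℤˣ :=
  if hilbertFormula p a b = 1 then 1 else -1

/-- The metaplectic cocycle, valued in `μ₂ = {±1} ⊆ ℤˣ`. -/
noncomputable def metaCocycleSign (p : ℕ) [Fact p.Prime]
    (g₁ g₂ : Matrix (Fin 2) (Fin 2) ℚ_[p]) : ℤˣ :=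
  hilbertSign p (cfun p (g₁ * g₂) / cfun p g₁)
    (cfun p (g₁ * g₂) / cfun p g₂ * g₁.det)

/-- Multiplication in the metaplectic cover `G̃ = G × μ₂`:
`(g₁,ζ₁)(g₂,ζ₂) = (g₁g₂, ζ₁ζ₂σ(g₁,g₂))`. -/
noncomputable def metaMul (p : ℕ) [Fact p.Prime]
    (x y : Matrix (Fin 2) (Fin 2) ℚ_[p] × ℤˣ) : Matrix (Fin 2) (Fin 2) ℚ_[p] × ℤˣ :=
  (x.1 * y.1, x.2 * y.2 * metaCocycleSign p x.1 y.1)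

lemma zpow_eq_one_of_even {G : Type*} [DivisionMonoid G] {s : G} (hs : s * s = 1) {n : ℤ}
    (hn : Even n) : s ^ n = 1 := by
  obtain ⟨m, rfl⟩ := hn
  rw [← two_mul, zpow_mul, zpow_two, hs, one_zpow]

lemma isSquare_iff_exists_sq_ne_zero {M₀ : Type*} [MonoidWithZero M₀] {a : M₀}
    (ha : a ≠ 0) : IsSquare a ↔ ∃ u, u ≠ 0 ∧ a = u ^ 2 := by
  refine (isSquare_iff_exists_sq a).trans
    ⟨fun ⟨u, hu⟩ => ⟨u, ?_, hu⟩, fun ⟨u, _, hu⟩ => ⟨u, hu⟩⟩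
  rintro rfl
  exact ha (by rw [hu, zero_pow two_ne_zero])

lemma Matrix.exists_eq_smul_one_of_forall_commute {n R : Type*} [Fintype n] [DecidableEq n]
    [CommRing R] [Nontrivial R] {g : Matrix n n R}
    (h : ∀ g' : Matrix n n R, g'.det ≠ 0 → g * g' = g' * g) : ∃ c : R, g = c • 1 := by
  obtain ⟨c, hc⟩ := mem_range_scalar_of_commute_transvectionStruct fun t =>
    (h t.toMatrix (by rw [t.det]; exact one_ne_zero)).symm
  exact ⟨c, by rw [← hc, scalar_apply, smul_one_eq_diagonal]⟩

namespace PadicInt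

variable {p : ℕ} [Fact p.Prime]

theorem toZMod_eq_zero_iff {z : ℤ_[p]} : toZMod z = 0 ↔ ¬IsUnit z := by
  rw [← RingHom.mem_ker, ker_toZMod, IsLocalRing.mem_maximalIdeal, mem_nonunits_iff]

open Polynomial in
theorem isSquare_of_isSquare_toZMod (hp : p ≠ 2) {u : ℤ_[p]} (hu : IsUnit u)
    (h : IsSquare (toZMod u)) : IsSquare u := by
  obtain ⟨s, hs⟩ := h
  have hs0 : s ≠ 0 := by
    rintro rfl
    exact toZMod_eq_zero_iff.mp (by rw [hs, mul_zero]) hu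
  have h2 : (2 : ZMod p) ≠ 0 := Ring.two_ne_zero (by rwa [ZMod.ringChar_zmod_n])
  set a : ℤ_[p] := (s.val : ℤ_[p])
  have ha : toZMod a = s := by simp [a]
  set F : ℤ_[p][X] := X ^ 2 - C u
  have hFa : ‖F.aeval a‖ < 1 := by
    rw [← not_isUnit_iff, ← toZMod_eq_zero_iff]
    simp [F, ha, hs, sq]
  have hF'a : ‖F.derivative.aeval a‖ = 1 := by
    rw [← isUnit_iff, ← not_not (a := IsUnit _), ← toZMod_eq_zero_iff]
    simp [F, ha, hs0, one_add_one_eq_two, map_ofNat, h2]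
  obtain ⟨w, hw, -⟩ := hensels_lemma (F := F) (a := a) (by rwa [hF'a, one_pow])
  exact ⟨w, by simpa [F, sub_eq_zero, sq, eq_comm] using hw⟩

end PadicInt

section Metaplectic

variable {p : ℕ} [Fact p.Prime]

lemma unitPart_mul_zpow_valuation (x : ℚ_[p]) :
    unitPart p x * (p : ℚ_[p]) ^ x.valuation = x := by
  rw [unitPart, mul_assoc, ← zpow_add₀ (by exact_mod_cast (Fact.out : p.Prime).ne_zero),
    neg_add_cancel, zpow_zero, mul_one]

lemma norm_unitPart {x : ℚ_[p]} (hx : x ≠ 0) : ‖unitPart p x‖ = 1 := by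
  have hp : (p : ℝ) ≠ 0 := by exact_mod_cast (Fact.out : p.Prime).ne_zero
  rw [unitPart, norm_mul, Padic.norm_eq_zpow_neg_valuation hx, norm_zpow, Padic.norm_p,
    inv_zpow, ← zpow_neg, neg_neg, ← zpow_add₀ hp, neg_add_cancel, zpow_zero]

lemma unitPart_mul {x y : ℚ_[p]} (hx : x ≠ 0) (hy : y ≠ 0) :
    unitPart p (x * y) = unitPart p x * unitPart p y := by
  have hp : (p : ℚ_[p]) ≠ 0 := by exact_mod_cast (Fact.out : p.Prime).ne_zero
  simp only [unitPart, Padic.valuation_mul hx hy, neg_add, zpow_add₀ hp]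
  ring

lemma valuation_coe_of_isUnit {z : ℤ_[p]} (hz : IsUnit z) : (z : ℚ_[p]).valuation = 0 := by
  have hz0 : (z : ℚ_[p]) ≠ 0 := PadicInt.coe_ne_zero.mpr hz.ne_zero
  have hp : (1 : ℝ) < p := by exact_mod_cast (Fact.out : p.Prime).one_lt
  have h := Padic.norm_eq_zpow_neg_valuation hz0
  rw [← PadicInt.norm_def, PadicInt.isUnit_iff.mp hz, eq_comm,
    zpow_eq_one_iff_right₀ (by positivity) hp.ne'] at h
  exact neg_eq_zero.mp h

lemma unitPart_coe_of_isUnit {z : ℤ_[p]} (hz : IsUnit z) : unitPart p z = z := by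
  rw [unitPart, valuation_coe_of_isUnit hz, neg_zero, zpow_zero, mul_one]

lemma omegaVal_of_ne_zero {x : ℚ_[p]} (hx : x ≠ 0) :
    omegaVal p x = PadicInt.toZMod (PadicInt.mkUnits (norm_unitPart hx) : ℤ_[p]) :=
  dif_pos _

lemma omegaVal_ne_zero {x : ℚ_[p]} (hx : x ≠ 0) : omegaVal p x ≠ 0 := by
  rw [omegaVal_of_ne_zero hx, Ne, PadicInt.toZMod_eq_zero_iff, not_not]
  exact Units.isUnit _

lemma omegaVal_coe_of_isUnit {z : ℤ_[p]} (hz : IsUnit z) :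
    omegaVal p z = PadicInt.toZMod z := by
  rw [omegaVal_of_ne_zero (PadicInt.coe_ne_zero.mpr hz.ne_zero)]
  congr
  exact PadicInt.ext (by rw [PadicInt.mkUnits_eq, unitPart_coe_of_isUnit hz])

lemma omegaVal_zero : omegaVal p 0 = 0 := by
  simp [omegaVal, unitPart]

lemma omegaVal_mul (x y : ℚ_[p]) : omegaVal p (x * y) = omegaVal p x * omegaVal p y := by
  rcases eq_or_ne x 0 with rfl | hx
  · rw [zero_mul, omegaVal_zero, zero_mul]
  rcases eq_or_ne y 0 with rfl | hy
  · rw [mul_zero, omegaVal_zero, mul_zero]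
  rw [omegaVal_of_ne_zero (mul_ne_zero hx hy), omegaVal_of_ne_zero hx, omegaVal_of_ne_zero hy,
    ← map_mul]
  congr 1
  apply PadicInt.ext
  rw [PadicInt.coe_mul, PadicInt.mkUnits_eq, PadicInt.mkUnits_eq, PadicInt.mkUnits_eq,
    unitPart_mul hx hy]

lemma omegaVal_one : omegaVal p 1 = 1 := by
  have h := omegaVal_mul (p := p) 1 1
  rw [mul_one] at h
  exact (mul_eq_left₀ (omegaVal_ne_zero one_ne_zero)).mp h.symm

variable (p) in
noncomputable def omegaHom : ℚ_[p] →*₀ ZMod p where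
  toFun := omegaVal p
  map_zero' := omegaVal_zero
  map_one' := omegaVal_one
  map_mul' := omegaVal_mul

@[simp]
lemma coe_omegaHom : ⇑(omegaHom p) = omegaVal p := rfl

lemma isSquare_of_even_valuation (hp : p ≠ 2) {a : ℚ_[p]} (ha : a ≠ 0)
    (hv : Even a.valuation) (hω : IsSquare (omegaVal p a)) : IsSquare a := by
  have hu : IsSquare (unitPart p a) := by
    rw [← PadicInt.mkUnits_eq (norm_unitPart ha)]
    exact (PadicInt.isSquare_of_isSquare_toZMod hp (Units.isUnit _)
      (omegaVal_of_ne_zero ha ▸ hω)).map PadicInt.Coe.ringHom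
  have hp0 : (p : ℚ_[p]) ≠ 0 := by exact_mod_cast (Fact.out : p.Prime).ne_zero
  obtain ⟨m, hm⟩ := hv
  have hpv : IsSquare ((p : ℚ_[p]) ^ a.valuation) :=
    ⟨(p : ℚ_[p]) ^ m, by rw [hm, zpow_add₀ hp0]⟩
  rw [← unitPart_mul_zpow_valuation a]
  exact hu.mul hpv

-- By Euler's criterion, the Legendre symbol of the residue of the unit part of `x`.
variable (p) in
noncomputable def legendreVal (x : ℚ_[p]) : ZMod p :=
  omegaVal p x ^ ((p - 1) / 2)

lemma legendreVal_mul (x y : ℚ_[p]) :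
    legendreVal p (x * y) = legendreVal p x * legendreVal p y := by
  rw [legendreVal, legendreVal, legendreVal, omegaVal_mul, mul_pow]

lemma legendreVal_mul_self (hp : Odd p) {x : ℚ_[p]} (hx : x ≠ 0) :
    legendreVal p x * legendreVal p x = 1 := by
  have h : (p - 1) / 2 + (p - 1) / 2 = p - 1 := by
    obtain ⟨k, hk⟩ := hp; omega
  rw [legendreVal, ← pow_add, h]
  exact ZMod.pow_card_sub_one_eq_one (omegaVal_ne_zero hx)

lemma legendreVal_inv (hp : Odd p) (x : ℚ_[p]) : (legendreVal p x)⁻¹ = legendreVal p x := by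
  rcases eq_or_ne x 0 with rfl | hx
  · rw [legendreVal, omegaVal_zero, ← inv_pow, inv_zero]
  · exact inv_eq_of_mul_eq_one_right (legendreVal_mul_self hp hx)

lemma legendreVal_of_isSquare (hp : Odd p) {u : ℚ_[p]} (hu : u ≠ 0) (hsq : IsSquare u) :
    legendreVal p u = 1 := by
  obtain ⟨r, rfl⟩ := hsq
  rw [legendreVal_mul, legendreVal_mul_self hp (left_ne_zero_of_mul hu)]

lemma legendreVal_eq_one_iff (hp : Odd p) {x : ℚ_[p]} (hx : x ≠ 0) :
    legendreVal p x = 1 ↔ IsSquare (omegaVal p x) := by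
  have h : (p - 1) / 2 = p / 2 := by
    obtain ⟨k, hk⟩ := hp; omega
  rw [legendreVal, h, ZMod.euler_criterion p (omegaVal_ne_zero hx)]

lemma exists_legendreVal_eq_neg_one (hp : Odd p) :
    ∃ ε : ℚ_[p], ε ≠ 0 ∧ ε.valuation = 0 ∧ legendreVal p ε = -1 := by
  obtain ⟨n, hn⟩ := FiniteField.exists_nonsquare (F := ZMod p)
    (by rw [ZMod.ringChar_zmod_n]; exact hp.ne_two_of_dvd_nat dvd_rfl)
  set z : ℤ_[p] := (n.val : ℤ_[p])
  have hz : PadicInt.toZMod z = n := by simp [z]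
  have hz_unit : IsUnit z := by
    rw [← not_not (a := IsUnit z), ← PadicInt.toZMod_eq_zero_iff, hz]
    rintro rfl
    exact hn ⟨0, by rw [mul_zero]⟩
  have hz0 : (z : ℚ_[p]) ≠ 0 := PadicInt.coe_ne_zero.mpr hz_unit.ne_zero
  refine ⟨z, hz0, valuation_coe_of_isUnit hz_unit, ?_⟩
  have hz_ne_one : legendreVal p z ≠ 1 := by
    rwa [Ne, legendreVal_eq_one_iff hp hz0, omegaVal_coe_of_isUnit hz_unit, hz]
  exact (mul_self_eq_one_iff.mp (legendreVal_mul_self hp hz0)).resolve_left hz_ne_one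

lemma hilbertFormula_eq (hp : Odd p) (a b : ℚ_[p]) :
    hilbertFormula p a b = legendreVal p (-1) ^ (a.valuation * b.valuation) *
      legendreVal p b ^ a.valuation * legendreVal p a ^ b.valuation := by
  have hχ (x : ℚ_[p]) : omegaVal p x ^ ((p - 1) / 2) = legendreVal p x := rfl
  rw [hilbertFormula, ← coe_omegaHom, map_div₀, map_mul, map_zpow₀, map_zpow₀, map_zpow₀,
    coe_omegaHom, div_pow, mul_pow, ← zpow_natCast, ← zpow_natCast, ← zpow_natCast, zpow_comm,
    zpow_comm (omegaVal p b), zpow_comm (omegaVal p a), zpow_natCast, zpow_natCast, zpow_natCast,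
    hχ, hχ, hχ, div_eq_mul_inv, ← inv_zpow, legendreVal_inv hp]

lemma hilbertFormula_comm (hp : Odd p) (a b : ℚ_[p]) :
    hilbertFormula p a b = hilbertFormula p b a := by
  rw [hilbertFormula_eq hp, hilbertFormula_eq hp, mul_comm a.valuation]
  ring

lemma hilbertSign_eq_one_iff {a b : ℚ_[p]} :
    hilbertSign p a b = 1 ↔ hilbertFormula p a b = 1 := by
  unfold hilbertSign
  split_ifs with h <;> simp [h]

lemma hilbertSign_comm (hp : Odd p) (a b : ℚ_[p]) : hilbertSign p a b = hilbertSign p b a := by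
  rw [hilbertSign, hilbertSign, hilbertFormula_comm hp]

lemma hilbertSign_one_left (b : ℚ_[p]) : hilbertSign p 1 b = 1 := by
  simp [hilbertSign_eq_one_iff, hilbertFormula, Padic.valuation_one, omegaVal_one]

lemma hilbertSign_one_right (hp : Odd p) (a : ℚ_[p]) : hilbertSign p a 1 = 1 := by
  rw [hilbertSign_comm hp, hilbertSign_one_left]

lemma hilbertSign_of_isSquare_right (hp : Odd p) {a b : ℚ_[p]} (ha : a ≠ 0) (hb : b ≠ 0)
    (hsq : IsSquare b) : hilbertSign p a b = 1 := by
  obtain ⟨r, rfl⟩ := hsq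
  have hr := left_ne_zero_of_mul hb
  have hv : Even (r * r).valuation := by rw [Padic.valuation_mul hr hr]; exact ⟨_, rfl⟩
  rw [hilbertSign_eq_one_iff, hilbertFormula_eq hp, legendreVal_of_isSquare hp hb ⟨r, rfl⟩,
    zpow_eq_one_of_even (legendreVal_mul_self hp (neg_ne_zero.mpr one_ne_zero)) (hv.mul_left _),
    zpow_eq_one_of_even (legendreVal_mul_self hp ha) hv, one_zpow, one_mul, one_mul]

lemma hilbertSign_of_isSquare_left (hp : Odd p) {a b : ℚ_[p]} (ha : a ≠ 0) (hb : b ≠ 0)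
    (hsq : IsSquare a) : hilbertSign p a b = 1 := by
  rw [hilbertSign_comm hp]
  exact hilbertSign_of_isSquare_right hp hb ha hsq

lemma even_valuation_of_forall_hilbertSign (hp : Odd p) {a : ℚ_[p]}
    (H : ∀ b, b ≠ 0 → hilbertSign p a b = 1) : Even a.valuation := by
  obtain ⟨ε, hε0, hεv, hε⟩ := exists_legendreVal_eq_neg_one hp
  have h := hilbertSign_eq_one_iff.mp (H ε hε0)
  rw [hilbertFormula_eq hp, hεv, mul_zero, zpow_zero, zpow_zero, one_mul, mul_one, hε] at h
  by_contra hodd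
  rw [(Int.not_even_iff_odd.mp hodd).neg_one_zpow] at h
  exact Ring.neg_one_ne_one_of_char_ne_two
    (by rw [ZMod.ringChar_zmod_n]; exact hp.ne_two_of_dvd_nat dvd_rfl) h

lemma isSquare_of_forall_hilbertSign (hp : Odd p) {a : ℚ_[p]} (ha : a ≠ 0)
    (H : ∀ b, b ≠ 0 → hilbertSign p a b = 1) : IsSquare a := by
  have hv := even_valuation_of_forall_hilbertSign hp H
  have hp0 : (p : ℚ_[p]) ≠ 0 := by exact_mod_cast (Fact.out : p.Prime).ne_zero
  have h := hilbertSign_eq_one_iff.mp (H p hp0)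
  rw [hilbertFormula_eq hp, Padic.valuation_p, mul_one, zpow_one,
    zpow_eq_one_of_even (legendreVal_mul_self hp (neg_ne_zero.mpr one_ne_zero)) hv,
    zpow_eq_one_of_even (legendreVal_mul_self hp hp0) hv, one_mul, one_mul] at h
  exact isSquare_of_even_valuation (hp.ne_two_of_dvd_nat dvd_rfl) ha hv
    ((legendreVal_eq_one_iff hp ha).mp h)

lemma metaMul_comm_iff {g g' : Matrix (Fin 2) (Fin 2) ℚ_[p]} {ζ ζ' : ℤˣ} :
    metaMul p (g, ζ) (g', ζ') = metaMul p (g', ζ') (g, ζ) ↔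
      g * g' = g' * g ∧ metaCocycleSign p g g' = metaCocycleSign p g' g := by
  rw [metaMul, metaMul, Prod.mk.injEq, mul_comm ζ' ζ, mul_right_inj]

lemma cfun_ne_zero {g : Matrix (Fin 2) (Fin 2) ℚ_[p]} (hg : g.det ≠ 0) : cfun p g ≠ 0 := by
  unfold cfun
  split_ifs with h10
  · exact h10
  · intro h11
    rw [not_not] at h10
    exact hg (by rw [Matrix.det_fin_two, h10, h11]; ring)

lemma cfun_diag (x y : ℚ_[p]) : cfun p !![x, 0; 0, y] = y := by
  simp [cfun]

lemma cfun_smul {c : ℚ_[p]} (hc : c ≠ 0) (g : Matrix (Fin 2) (Fin 2) ℚ_[p]) :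
    cfun p (c • g) = c * cfun p g := by
  unfold cfun
  by_cases hg : g 1 0 = 0
  · simp [hg]
  · simp [hg, hc]

lemma cfun_one : cfun p (1 : Matrix (Fin 2) (Fin 2) ℚ_[p]) = 1 := by
  simp [cfun]

lemma diag_mul_diag (x y x' y' : ℚ_[p]) :
    !![x, 0; 0, y] * !![x', 0; 0, y'] = !![x * x', 0; 0, y * y'] := by
  rw [Matrix.mul_fin_two]
  simp

lemma metaCocycleSign_diag {x y x' y' : ℚ_[p]} (hy : y ≠ 0) (hy' : y' ≠ 0) :
    metaCocycleSign p !![x, 0; 0, y] !![x', 0; 0, y'] = hilbertSign p y' (x * y ^ 2) := by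
  rw [metaCocycleSign, diag_mul_diag, cfun_diag, cfun_diag, cfun_diag, Matrix.det_fin_two_of,
    mul_div_cancel_left₀ _ hy, mul_div_cancel_right₀ _ hy']
  congr 1
  ring

lemma metaCocycleSign_smul_one_left {c : ℚ_[p]} (hc : c ≠ 0)
    {g : Matrix (Fin 2) (Fin 2) ℚ_[p]} (hg : g.det ≠ 0) :
    metaCocycleSign p (c • 1) g = hilbertSign p (cfun p g) (c ^ 3) := by
  rw [metaCocycleSign, smul_mul_assoc, one_mul, cfun_smul hc, cfun_smul hc, cfun_one, mul_one,
    mul_div_cancel_left₀ _ hc, mul_div_cancel_right₀ _ (cfun_ne_zero hg), Matrix.det_smul,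
    Matrix.det_one, Fintype.card_fin]
  congr 1
  ring

lemma metaCocycleSign_smul_one_right {c : ℚ_[p]} (hc : c ≠ 0)
    {g : Matrix (Fin 2) (Fin 2) ℚ_[p]} (hg : g.det ≠ 0) :
    metaCocycleSign p g (c • 1) = hilbertSign p c (cfun p g * g.det) := by
  rw [metaCocycleSign, mul_smul_comm, mul_one, cfun_smul hc, cfun_smul hc, cfun_one, mul_one,
    mul_div_cancel_right₀ _ (cfun_ne_zero hg), mul_div_cancel_left₀ _ hc]

theorem metaMul_diag_comm_iff (hp : Odd p) {x y : ℚ_[p]} (hx : x ≠ 0) (hy : y ≠ 0)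
    (ζ : ℤˣ) :
    (∀ (x' y' : ℚ_[p]) (ζ' : ℤˣ), x' ≠ 0 → y' ≠ 0 →
      metaMul p (!![x, 0; 0, y], ζ) (!![x', 0; 0, y'], ζ') =
        metaMul p (!![x', 0; 0, y'], ζ') (!![x, 0; 0, y], ζ)) ↔
    IsSquare x ∧ IsSquare y := by
  have hcomm (x' y' : ℚ_[p]) :
      !![x, 0; 0, y] * !![x', 0; 0, y'] = !![x', 0; 0, y'] * !![x, 0; 0, y] := by
    rw [diag_mul_diag, diag_mul_diag, mul_comm x, mul_comm y]
  simp only [metaMul_comm_iff, hcomm, true_and]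
  constructor
  · intro H
    have key (x' y' : ℚ_[p]) (hx' : x' ≠ 0) (hy' : y' ≠ 0) :
        hilbertSign p y' (x * y ^ 2) = hilbertSign p y (x' * y' ^ 2) := by
      rw [← metaCocycleSign_diag hy hy', ← metaCocycleSign_diag hy' hy]
      exact H x' y' 1 hx' hy'
    have hxy : IsSquare (x * y ^ 2) :=
      isSquare_of_forall_hilbertSign hp (by positivity) fun b hb => by
        rw [hilbertSign_comm hp, key (b⁻¹ ^ 2) b (by positivity) hb, ← mul_pow,
          inv_mul_cancel₀ hb, one_pow, hilbertSign_one_right hp]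
    refine ⟨?_, isSquare_of_forall_hilbertSign hp hy fun b hb => ?_⟩
    · simpa [hy] using hxy.div (IsSquare.sq y)
    · simpa [hilbertSign_one_left] using (key b 1 hb one_ne_zero).symm
  · rintro ⟨hx_sq, hy_sq⟩ x' y' - hx' hy'
    rw [metaCocycleSign_diag hy hy', metaCocycleSign_diag hy' hy,
      hilbertSign_of_isSquare_right hp hy' (by positivity) (hx_sq.mul (IsSquare.sq y)),
      hilbertSign_of_isSquare_left hp hy (by positivity) hy_sq]

theorem metaMul_comm_iff_eq_sq_smul_one (hp : Odd p) {g : Matrix (Fin 2) (Fin 2) ℚ_[p]}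
    (hg : g.det ≠ 0) (ζ : ℤˣ) :
    (∀ (g' : Matrix (Fin 2) (Fin 2) ℚ_[p]) (ζ' : ℤˣ), g'.det ≠ 0 →
      metaMul p (g, ζ) (g', ζ') = metaMul p (g', ζ') (g, ζ)) ↔
    ∃ u : ℚ_[p], u ≠ 0 ∧ g = (u ^ 2) • (1 : Matrix (Fin 2) (Fin 2) ℚ_[p]) := by
  simp only [metaMul_comm_iff]
  constructor
  · intro H
    obtain ⟨c, rfl⟩ := Matrix.exists_eq_smul_one_of_forall_commute fun g' hg' => (H g' 1 hg').1
    have hc : c ≠ 0 := by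
      rintro rfl
      simp at hg
    have hsq : IsSquare c := isSquare_of_forall_hilbertSign hp hc fun t ht => by
      have hdet : (!![t, 0; 0, 1] : Matrix (Fin 2) (Fin 2) ℚ_[p]).det = t := by
        simp [Matrix.det_fin_two_of]
      have ht' : (!![t, 0; 0, 1] : Matrix (Fin 2) (Fin 2) ℚ_[p]).det ≠ 0 := by rwa [hdet]
      have h := (H !![t, 0; 0, 1] 1 ht').2
      rwa [metaCocycleSign_smul_one_left hc ht', metaCocycleSign_smul_one_right hc ht',
        cfun_diag, hdet, one_mul, hilbertSign_one_left, eq_comm] at h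
    obtain ⟨u, hu, rfl⟩ := (isSquare_iff_exists_sq_ne_zero hc).mp hsq
    exact ⟨u, hu, rfl⟩
  · rintro ⟨u, hu, rfl⟩ g' - hg'
    have hc : u ^ 2 ≠ 0 := pow_ne_zero 2 hu
    refine ⟨by rw [smul_mul_assoc, one_mul, mul_smul_comm, mul_one], ?_⟩
    rw [metaCocycleSign_smul_one_left hc hg', metaCocycleSign_smul_one_right hc hg',
      hilbertSign_of_isSquare_right hp (cfun_ne_zero hg') (pow_ne_zero 3 hc)
        ((IsSquare.sq u).pow 3),
      hilbertSign_of_isSquare_left hp hc (mul_ne_zero (cfun_ne_zero hg') hg') (IsSquare.sq u)]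

end Metaplectic

/-- The center of the metaplectic cover `T̃` of the diagonal torus is `T^sq × μ₂`, and the
center of `G̃` is `Z^sq × μ₂`: an element `(diag(x,y),ζ)` of `T̃` commutes with all elements of
`T̃` iff `x` and `y` are squares in `ℚ_p^×`, and an element `(g,ζ)` of `G̃` commutes with all
elements of `G̃` iff `g` is a scalar matrix with square entry. -/
theorem statement4 (p : ℕ) [Fact p.Prime] (hp : Odd p) :
    (∀ (x y : ℚ_[p]) (ζ : ℤˣ), x ≠ 0 → y ≠ 0 →
      ((∀ (x' y' : ℚ_[p]) (ζ' : ℤˣ), x' ≠ 0 → y' ≠ 0 →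
          metaMul p (!![x, 0; 0, y], ζ) (!![x', 0; 0, y'], ζ') =
            metaMul p (!![x', 0; 0, y'], ζ') (!![x, 0; 0, y], ζ)) ↔
        ((∃ u : ℚ_[p], u ≠ 0 ∧ x = u ^ 2) ∧ (∃ u : ℚ_[p], u ≠ 0 ∧ y = u ^ 2)))) ∧
    (∀ (g : Matrix (Fin 2) (Fin 2) ℚ_[p]) (ζ : ℤˣ), g.det ≠ 0 →
      ((∀ (g' : Matrix (Fin 2) (Fin 2) ℚ_[p]) (ζ' : ℤˣ), g'.det ≠ 0 →
          metaMul p (g, ζ) (g', ζ') = metaMul p (g', ζ') (g, ζ)) ↔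
        (∃ u : ℚ_[p], u ≠ 0 ∧ g = (u ^ 2) • (1 : Matrix (Fin 2) (Fin 2) ℚ_[p])))) := by
  refine ⟨fun x y ζ hx hy => ?_, fun g ζ hg => metaMul_comm_iff_eq_sq_smul_one hp hg ζ⟩
  rw [metaMul_diag_comm_iff hp hx hy, isSquare_iff_exists_sq_ne_zero hx,
    isSquare_iff_exists_sq_ne_zero hy]
end

section
/- Let k be an algebraically closed field of characteristic p (p odd) and χ a character of H = diagonal Teichmüller matrices with (χ⁻¹χ^s)² ≠ 1 (square-regular). Then the Hecke algebra H(χ) = End_{G̃}(cInd_{Ĩ}^{G̃}(χ ⊠ ι)) is isomorphic as a k-algebra to k[X,Y,Z^{±1}]/(XY), via Z ↦ T_{2,2}, X ↦ T_{2,0}, Y ↦ T_{0,2}, where T_{i,j} is the basis element supported on the double coset of diag(p^i, p^j). In particular H(χ) is commutative. -/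
/-!
Write `X = T_{2,0}`, `Y = T_{0,2}`, `Z = T_{2,2}`. The relations force
`T_{2i,2j} = Z^{min(i,j)} X^{i-j} Y^{j-i}` (the negative exponent read as `0`), and `Z` is
central while `XY = YX = 0`, so the basis consists of pairwise commuting elements and the algebra
is commutative. Hence `X, Y, Z^{±1}` define an algebra map out of `k[X,Y,Z^{±1}]/(XY)`; it sends
the monomials `Z^{min(i,j)} X^{i-j} Y^{j-i}`, which span the quotient, onto the basis
`(T_{2i,2j})`, so it is bijective.
-/

open MvPolynomial

section Monomial

variable {S : Type*}

def zxyMonomial [Monoid S] (u : Sˣ) (x y : S) (i j : ℤ) : S :=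
  (u ^ min i j : Sˣ) * x ^ (i - j).toNat * y ^ (j - i).toNat

theorem zxyMonomial_commute [Monoid S] {u : Sˣ} {x y : S} (hux : Commute (u : S) x)
    (huy : Commute (u : S) y) (hxy : Commute x y) (i j i' j' : ℤ) :
    Commute (zxyMonomial u x y i j) (zxyMonomial u x y i' j') := by
  unfold zxyMonomial
  apply_rules [Commute.mul_left, Commute.mul_right, Commute.pow_left, Commute.pow_right,
    Commute.units_zpow_left, Commute.units_zpow_right, Commute.refl, Commute.symm]

theorem map_zxyMonomial {S S' F : Type*} [Monoid S] [Monoid S'] [FunLike F S S']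
    [MonoidHomClass F S S'] (f : F) (u : Sˣ) (x y : S) (i j : ℤ) :
    f (zxyMonomial u x y i j) = zxyMonomial (Units.map (f : S →* S') u) (f x) (f y) i j := by
  simp only [zxyMonomial, map_mul, map_pow, ← map_zpow, Units.coe_map, MonoidHom.coe_coe]

variable [CommSemiring S] {u : Sˣ} {x y : S}

theorem zxyMonomial_mul_zpow (i j n : ℤ) :
    zxyMonomial u x y i j * (u ^ n : Sˣ) = zxyMonomial u x y (i + n) (j + n) := by
  have hmin : min (i + n) (j + n) = min i j + n := min_add_add_right i j n
  simp only [zxyMonomial, hmin, zpow_add, Units.val_mul, add_sub_add_right_eq_sub]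
  ring

theorem zxyMonomial_mul_left_of_le {i j : ℤ} (h : j ≤ i) :
    zxyMonomial u x y i j * x = zxyMonomial u x y (i + 1) j := by
  have h1 : min (i + 1) j = min i j := by omega
  have h2 : (i + 1 - j).toNat = (i - j).toNat + 1 := by omega
  have h3 : (j - (i + 1)).toNat = (j - i).toNat := by omega
  simp only [zxyMonomial, h1, h2, h3, pow_succ]
  ring

theorem zxyMonomial_mul_left_of_lt (hyx : y * x = 0) {i j : ℤ} (h : i < j) :
    zxyMonomial u x y i j * x = 0 := by
  obtain ⟨m, hm⟩ : ∃ m, (j - i).toNat = m + 1 := ⟨(j - i).toNat - 1, by omega⟩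
  simp only [zxyMonomial, hm, pow_succ, mul_assoc, hyx, mul_zero]

theorem zxyMonomial_swap (i j : ℤ) : zxyMonomial u x y i j = zxyMonomial u y x j i := by
  simp only [zxyMonomial, min_comm i j]
  ring

end Monomial

/-- `R[X, Y, Z^{±1}]/(XY)`, presented with variables `X 0 = X`, `X 1 = Y`, `X 2 = Z`,
`X 3 = Z⁻¹`. -/
noncomputable abbrev XYZQuotient (R : Type*) [CommRing R] :=
  MvPolynomial (Fin 4) R ⧸ Ideal.span ({X 0 * X 1, X 2 * X 3 - 1} : Set (MvPolynomial (Fin 4) R))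

namespace XYZQuotient

variable (R : Type*) [CommRing R]

noncomputable def mk : MvPolynomial (Fin 4) R →ₐ[R] XYZQuotient R := Ideal.Quotient.mkₐ R _

theorem mk_X0_mul_X1 : mk R (X 0) * mk R (X 1) = 0 := by
  rw [← map_mul, mk, Ideal.Quotient.mkₐ_eq_mk, Ideal.Quotient.eq_zero_iff_mem]
  exact Ideal.subset_span (by simp)

theorem mk_X2_mul_X3 : mk R (X 2) * mk R (X 3) = 1 := by
  rw [← map_mul, ← map_one (mk R), mk, Ideal.Quotient.mkₐ_eq_mk, Ideal.Quotient.eq]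
  exact Ideal.subset_span (by simp)

noncomputable def zUnit : (XYZQuotient R)ˣ :=
  ⟨mk R (X 2), mk R (X 3), mk_X2_mul_X3 R, by rw [mul_comm]; exact mk_X2_mul_X3 R⟩

noncomputable abbrev basisMonomial (i j : ℤ) : XYZQuotient R :=
  zxyMonomial (zUnit R) (mk R (X 0)) (mk R (X 1)) i j

theorem basisMonomial_mul_X_mem_span (n : Fin 4) (i j : ℤ) :
    basisMonomial R i j * mk R (X n) ∈
      Submodule.span R (Set.range fun ij : ℤ × ℤ => basisMonomial R ij.1 ij.2) := by
  have hmem : ∀ i j, basisMonomial R i j ∈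
      Submodule.span R (Set.range fun ij : ℤ × ℤ => basisMonomial R ij.1 ij.2) :=
    fun i j => Submodule.subset_span ⟨(i, j), rfl⟩
  have hxy := mk_X0_mul_X1 R
  have hyx : mk R (X 1) * mk R (X 0) = 0 := by rw [mul_comm]; exact hxy
  match n with
  | 0 =>
    rcases le_or_gt j i with h | h
    · rw [basisMonomial, zxyMonomial_mul_left_of_le h]; exact hmem _ _
    · rw [basisMonomial, zxyMonomial_mul_left_of_lt hyx h]; exact Submodule.zero_mem _
  | 1 =>
    rw [basisMonomial, zxyMonomial_swap]
    rcases le_or_gt i j with h | h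
    · rw [zxyMonomial_mul_left_of_le h, ← zxyMonomial_swap]; exact hmem _ _
    · rw [zxyMonomial_mul_left_of_lt hxy h]; exact Submodule.zero_mem _
  | 2 =>
    have hz : mk R (X 2) = ((zUnit R ^ (1 : ℤ) : (XYZQuotient R)ˣ) : XYZQuotient R) := by
      rw [zpow_one]; rfl
    rw [hz, basisMonomial, zxyMonomial_mul_zpow]
    exact hmem _ _
  | 3 =>
    have hz : mk R (X 3) = ((zUnit R ^ (-1 : ℤ) : (XYZQuotient R)ˣ) : XYZQuotient R) := by
      rw [zpow_neg_one]; rfl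
    rw [hz, basisMonomial, zxyMonomial_mul_zpow]
    exact hmem _ _

theorem span_basisMonomial :
    Submodule.span R (Set.range fun ij : ℤ × ℤ => basisMonomial R ij.1 ij.2) = ⊤ := by
  set M := Submodule.span R (Set.range fun ij : ℤ × ℤ => basisMonomial R ij.1 ij.2)
  have hmul_X : ∀ n, ∀ a ∈ M, a * mk R (X n) ∈ M := by
    intro n a ha
    induction ha using Submodule.span_induction with
    | mem _ h => obtain ⟨ij, rfl⟩ := h; exact basisMonomial_mul_X_mem_span R n ij.1 ij.2
    | zero => rw [zero_mul]; exact M.zero_mem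
    | add a b _ _ ha hb => rw [add_mul]; exact M.add_mem ha hb
    | smul c a _ ha => rw [smul_mul_assoc]; exact M.smul_mem c ha
  rw [Submodule.eq_top_iff']
  intro q
  obtain ⟨q, rfl⟩ := Ideal.Quotient.mkₐ_surjective R _ q
  change mk R q ∈ M
  induction q using MvPolynomial.induction_on with
  | C a =>
    have hone : basisMonomial R 0 0 = 1 := by simp [zxyMonomial]
    rw [algHom_C, Algebra.algebraMap_eq_smul_one, ← hone]
    exact M.smul_mem a (Submodule.subset_span ⟨(0, 0), rfl⟩)
  | add p q hp hq => rw [map_add]; exact M.add_mem hp hq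
  | mul_X p n hp => rw [map_mul]; exact hmul_X n _ hp

variable {R} {S : Type*} [CommRing S] [Algebra R S]

noncomputable def lift (x y : S) (u : Sˣ) (hxy : x * y = 0) : XYZQuotient R →ₐ[R] S :=
  Ideal.Quotient.liftₐ _ (aeval ![x, y, u, ↑u⁻¹]) fun q hq => by
    induction hq using Submodule.span_induction with
    | mem q hq =>
      rcases hq with rfl | rfl
      · simp [hxy]
      · simp
    | zero => exact map_zero _
    | add a b _ _ ha hb => rw [map_add, ha, hb, add_zero]
    | smul c a _ ha => rw [smul_eq_mul, map_mul, ha, mul_zero]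

variable {x y : S} {u : Sˣ} (hxy : x * y = 0)

theorem lift_mk (q : MvPolynomial (Fin 4) R) :
    lift (R := R) x y u hxy (mk R q) = aeval ![x, y, u, ↑u⁻¹] q :=
  rfl

theorem lift_basisMonomial (i j : ℤ) :
    lift (R := R) x y u hxy (basisMonomial R i j) = zxyMonomial u x y i j := by
  have hu : Units.map (lift x y u hxy : XYZQuotient R →ₐ[R] S) (zUnit R) = u := by
    ext
    exact (lift_mk hxy _).trans (by simp)
  rw [basisMonomial, map_zxyMonomial, hu, lift_mk hxy, lift_mk hxy]
  simp

end XYZQuotient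

theorem pow_one_eq_of_map_add {M : Type*} [Monoid M] {f : ℕ → M} (h0 : f 0 = 1)
    (hf : ∀ m n, f m * f n = f (m + n)) (m : ℕ) : f 1 ^ m = f m := by
  induction m with
  | zero => rw [pow_zero, h0]
  | succ m ih => rw [pow_succ, ih, hf]

theorem commute_of_span_eq_top {R A ι : Type*} [CommRing R] [Ring A] [Algebra R A] {v : ι → A}
    (hv : Submodule.span R (Set.range v) = ⊤) {a : A} (h : ∀ i, Commute a (v i)) (b : A) :
    Commute a b := by
  refine Algebra.commute_of_mem_adjoin_of_forall_mem_commute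
    (Algebra.span_le_adjoin R _ (hv ▸ Submodule.mem_top : b ∈ _)) ?_
  rintro _ ⟨i, rfl⟩
  exact h i

section DiagonalBasis

variable {A : Type*} [Ring A] {t : ℤ → ℤ → A}

theorem units_zpow_mul_eq_shift {u : Aˣ} (hu : ∀ i j, (u : A) * t i j = t (i + 1) (j + 1))
    (n i j : ℤ) : ((u ^ n : Aˣ) : A) * t i j = t (i + n) (j + n) := by
  have hu_inv : ∀ i j, ((u⁻¹ : Aˣ) : A) * t i j = t (i - 1) (j - 1) := fun i j => by
    rw [Units.inv_mul_eq_iff_eq_mul, hu, sub_add_cancel, sub_add_cancel]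
  induction n using Int.induction_on generalizing i j with
  | zero => simp
  | succ n ih =>
    rw [zpow_add_one, Units.val_mul, mul_assoc, hu, ih]
    ring_nf
  | pred n ih =>
    rw [zpow_sub_one, Units.val_mul, mul_assoc, hu_inv, ih]
    ring_nf

theorem eq_zxyMonomial {u : Aˣ} (hu : ∀ n i j, ((u ^ n : Aˣ) : A) * t i j = t (i + n) (j + n))
    (hx : ∀ m : ℕ, t 1 0 ^ m = t m 0) (hy : ∀ m : ℕ, t 0 1 ^ m = t 0 m) (i j : ℤ) :
    t i j = zxyMonomial u (t 1 0) (t 0 1) i j := by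
  rcases le_total j i with h | h
  · have hji : ((i - j).toNat : ℤ) = i - j := by omega
    rw [zxyMonomial, min_eq_right h, Int.toNat_of_nonpos (by omega : j - i ≤ 0), pow_zero,
      mul_one, hx, hji, hu, sub_add_cancel, zero_add]
  · have hij : ((j - i).toNat : ℤ) = j - i := by omega
    rw [zxyMonomial, min_eq_left h, Int.toNat_of_nonpos (by omega : i - j ≤ 0), pow_zero,
      mul_one, hy, hij, hu, sub_add_cancel, zero_add]

end DiagonalBasis

theorem statement5_general (k : Type*) [Field k]
    (A : Type*) [Ring A] [Algebra k A]
    (t : ℤ → ℤ → A)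
    (hli : LinearIndependent k (fun ij : ℤ × ℤ => t ij.1 ij.2))
    (hspan : Submodule.span k (Set.range (fun ij : ℤ × ℤ => t ij.1 ij.2)) = ⊤)
    (h00 : t 0 0 = 1)
    (hZ : ∀ i j : ℤ, t 1 1 * t i j = t (i + 1) (j + 1) ∧ t i j * t 1 1 = t (i + 1) (j + 1))
    (hZinv : t 1 1 * t (-1) (-1) = 1 ∧ t (-1) (-1) * t 1 1 = 1)
    (hX : ∀ m n : ℕ, t (m : ℤ) 0 * t (n : ℤ) 0 = t ((m : ℤ) + n) 0)
    (hY : ∀ m n : ℕ, t 0 (m : ℤ) * t 0 (n : ℤ) = t 0 ((m : ℤ) + n))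
    (hXY : t 1 0 * t 0 1 = 0 ∧ t 0 1 * t 1 0 = 0) :
    ∃ e : A ≃ₐ[k] (MvPolynomial (Fin 4) k ⧸
        Ideal.span ({X 0 * X 1, X 2 * X 3 - 1} : Set (MvPolynomial (Fin 4) k))),
      e (t 1 0) = Ideal.Quotient.mk _ (X 0) ∧
      e (t 0 1) = Ideal.Quotient.mk _ (X 1) ∧
      e (t 1 1) = Ideal.Quotient.mk _ (X 2) ∧
      ∀ a b : A, a * b = b * a := by
  let u : Aˣ := ⟨t 1 1, t (-1) (-1), hZinv.1, hZinv.2⟩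
  have ht : ∀ i j, t i j = zxyMonomial u (t 1 0) (t 0 1) i j :=
    eq_zxyMonomial (units_zpow_mul_eq_shift fun i j => (hZ i j).1)
      (pow_one_eq_of_map_add (f := fun m => t m 0) h00 fun m n => by push_cast; exact hX m n)
      (pow_one_eq_of_map_add (f := fun m => t 0 m) h00 fun m n => by push_cast; exact hY m n)
  have hcentral : ∀ a, Commute (u : A) a := commute_of_span_eq_top hspan fun ij =>
    (hZ ij.1 ij.2).1.trans (hZ ij.1 ij.2).2.symm
  have hbasis : ∀ i j i' j', Commute (t i j) (t i' j') := fun i j i' j' => by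
    rw [ht i j, ht i' j']
    exact zxyMonomial_commute (hcentral _) (hcentral _) (hXY.1.trans hXY.2.symm) _ _ _ _
  have hcomm : ∀ a b : A, Commute a b := fun a => commute_of_span_eq_top hspan fun ij' =>
    (commute_of_span_eq_top hspan (fun ij => hbasis _ _ ij.1 ij.2) a).symm
  let _ : CommRing A := { ‹Ring A› with mul_comm := fun a b => (hcomm a b).eq }
  let φ : XYZQuotient k →ₐ[k] A := XYZQuotient.lift (t 1 0) (t 0 1) u hXY.1
  have hφ : (φ.toLinearMap ∘ fun ij : ℤ × ℤ => XYZQuotient.basisMonomial k ij.1 ij.2) =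
      fun ij => t ij.1 ij.2 := by
    ext ij
    exact (XYZQuotient.lift_basisMonomial hXY.1 _ _).trans (ht _ _).symm
  have hbij : Function.Bijective φ := LinearMap.bijective_of_linearIndependent_of_span_eq_top
    (XYZQuotient.span_basisMonomial k) (hφ ▸ hli) (hφ ▸ hspan)
  refine ⟨(AlgEquiv.ofBijective φ hbij).symm, ?_, ?_, ?_, hcomm⟩ <;>
    rw [AlgEquiv.symm_apply_eq, AlgEquiv.ofBijective_apply] <;>
    exact ((XYZQuotient.lift_mk hXY.1 _).trans (by simp [u])).symm

/-- Let `χ` be a square-regular character and `H(χ)` the corresponding summand of the genuine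
pro-`p` Iwahori Hecke algebra of the metaplectic cover of `GL₂(ℚ_p)`.  Abstractly: `A` is a
`k`-algebra with `k`-basis `{T_{2i,2j}}_{i,j ∈ ℤ}` (here `t i j` stands for `T_{2i,2j}`)
satisfying the established relations (`T_{0,0} = 1`, `T_{2,2}` central invertible with inverse
`T_{-2,-2}`, `T_{2,0}^m = T_{2m,0}`, `T_{0,2}^m = T_{0,2m}`, `T_{2,0}T_{0,2} = 0`).
Then `A ≅ k[X,Y,Z^{±1}]/(XY)` as `k`-algebras via `Z ↦ T_{2,2}`, `X ↦ T_{2,0}`,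
`Y ↦ T_{0,2}`; in particular `A` is commutative. -/
theorem statement5 (k : Type*) [Field k] [IsAlgClosed k] (p : ℕ) [Fact p.Prime] [CharP k p]
    (hp : Odd p)
    (A : Type*) [Ring A] [Algebra k A]
    (t : ℤ → ℤ → A)
    (hli : LinearIndependent k (fun ij : ℤ × ℤ => t ij.1 ij.2))
    (hspan : Submodule.span k (Set.range (fun ij : ℤ × ℤ => t ij.1 ij.2)) = ⊤)
    (h00 : t 0 0 = 1)
    (hZ : ∀ i j : ℤ, t 1 1 * t i j = t (i + 1) (j + 1) ∧ t i j * t 1 1 = t (i + 1) (j + 1))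
    (hZinv : t 1 1 * t (-1) (-1) = 1 ∧ t (-1) (-1) * t 1 1 = 1)
    (hX : ∀ m n : ℕ, t (m : ℤ) 0 * t (n : ℤ) 0 = t ((m : ℤ) + n) 0)
    (hY : ∀ m n : ℕ, t 0 (m : ℤ) * t 0 (n : ℤ) = t 0 ((m : ℤ) + n))
    (hXY : t 1 0 * t 0 1 = 0 ∧ t 0 1 * t 1 0 = 0) :
    ∃ e : A ≃ₐ[k] (MvPolynomial (Fin 4) k ⧸
        Ideal.span ({X 0 * X 1, X 2 * X 3 - 1} : Set (MvPolynomial (Fin 4) k))),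
      e (t 1 0) = Ideal.Quotient.mk _ (X 0) ∧
      e (t 0 1) = Ideal.Quotient.mk _ (X 1) ∧
      e (t 1 1) = Ideal.Quotient.mk _ (X 2) ∧
      ∀ a b : A, a * b = b * a :=
  statement5_general k A t hli hspan h00 hZ hZinv hX hY hXY
end

section
/- Basic Lemma (torsion computation): Let k be a field of characteristic p, R = k[[X]][F] the twisted polynomial ring with FX = X^p F, and let π be an R-module containing linearly independent elements v₁,…,v_n with Xv_i = 0 and X^{s_i}F(v_i) = c_i v_{i+1} (indices mod n) for some s_i ∈ Z_{≥0}, c_i ∈ k^×. Let π_i = k[[X]][F^n]v_i. Then the X-torsion of π_i equals k·v_i, and the submodule π_M = k[[X]][F]·(⊕kv_i) decomposes as ⊕_{i=1}^n π_i as k[[X]][F^n]-modules with π_M[X] = ⊕_{i=1}^n k v_i. -/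
/-!
Since `X` kills `v i`, going once around the cycle gives `X ^ e • F^[n] (v i) = b • v i` with
`b ≠ 0`, and applying `F^[n * m]` turns this into `X ^ (e * p ^ (n * m)) • g (m + 1) = b • g m`
for the generators `g m = F^[n * m] (v i)` of `π_i`. Each `g m` is thus a multiple of `g (m + 1)`,
so `π_i` is the increasing union of the cyclic modules `k⟦X⟧ ∙ g M`; moreover `X ^ E • g M` is a
nonzero multiple of `v i` for `E = ∑ m < M, e * p ^ (n * m)`, so `X ^ (E + 1)` kills `g M`.
Writing `f = u * X ^ t` with `u` a unit, `X • f • g M = 0` forces `t ≥ E`, i.e. `f • g M ∈ k ∙ v i`.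

If `X` kills `∑ t i` with `t i ∈ π_i`, and `X ^ (D + 2)` kills every `t i`, then the elements
`X ^ (D + 1) • t i` are `X`-torsion, hence multiples `a i • v i` with `∑ a i • v i = 0`; linear
independence makes them vanish, and descending on `D` shows that `X` kills each `t i`. This gives
both the directness of `∑ π_i` and `π_M[X] = ⊕ k v_i` once `π_M = ∑ π_i`, which holds because
walking back along the cycle expresses every `F^[m] (v j)` through some `F^[n * q] (v l)`.
-/

open Function Submodule PowerSeries

section StableClosure

variable {R M : Type*} [Semiring R] [AddCommMonoid M] [Module R M]

theorem sInf_stable_eq_span_iterate_image {ψ : R → R} {G : M → M} (hG0 : G 0 = 0)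
    (hadd : ∀ x y, G (x + y) = G x + G y) (hG : ∀ (f : R) (w : M), G (f • w) = ψ f • G w)
    (T : Set M) :
    sInf {N : Submodule R M | T ⊆ N ∧ ∀ w ∈ N, G w ∈ N} = span R (⋃ m, G^[m] '' T) := by
  apply le_antisymm
  · refine sInf_le ⟨fun x hx => subset_span (Set.mem_iUnion.mpr ⟨0, x, hx, rfl⟩), ?_⟩
    intro w hw
    induction hw using span_induction with
    | mem x hx =>
      obtain ⟨m, y, hy, rfl⟩ := Set.mem_iUnion.mp hx
      exact subset_span (Set.mem_iUnion.mpr ⟨m + 1, y, hy, iterate_succ_apply' _ _ _⟩)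
    | zero => simp [hG0]
    | add x y _ _ hx hy => simpa [hadd] using add_mem hx hy
    | smul f x _ hx => simpa [hG] using smul_mem _ (ψ f) hx
  · refine le_sInf fun N ⟨hT, hN⟩ => span_le.mpr <| Set.iUnion_subset fun m => ?_
    rintro _ ⟨x, hx, rfl⟩
    induction m with
    | zero => exact hT hx
    | succ m ih => simpa [iterate_succ_apply'] using hN _ ih

end StableClosure

theorem iterate_map_smul_of_semilinear {R M : Type*} [SMul R M] {ψ : R → R} {G : M → M}
    (hG : ∀ (f : R) (w : M), G (f • w) = ψ f • G w) (j : ℕ) (f : R) (w : M) :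
    G^[j] (f • w) = ψ^[j] f • G^[j] w := by
  induction j generalizing f w with
  | zero => rfl
  | succ j ih => rw [iterate_succ_apply, iterate_succ_apply, iterate_succ_apply, hG, ih]

section Torsion

variable {k π : Type*} [Field k] [AddCommGroup π] [Module k⟦X⟧ π] [Module k π]
  [IsScalarTower k k⟦X⟧ π]

theorem PowerSeries.C_smul_eq_smul (a : k) (x : π) : C a • x = a • x := by
  rw [← algebraMap_smul (k⟦X⟧) a x, PowerSeries.algebraMap_apply, Algebra.algebraMap_self_apply]

theorem PowerSeries.smul_eq_constantCoeff_smul {v : π} (hv : (X : k⟦X⟧) • v = 0) (f : k⟦X⟧) :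
    f • v = constantCoeff f • v := by
  conv_lhs => rw [eq_shift_mul_X_add_const f]
  rw [add_smul, mul_smul, hv, smul_zero, zero_add, C_smul_eq_smul]

theorem exists_smul_eq_of_X_smul_eq_zero {w v : π} {E : ℕ} {b : k} (hb : b ≠ 0) (hv : v ≠ 0)
    (hXv : (X : k⟦X⟧) • v = 0) (hw : (X : k⟦X⟧) ^ E • w = b • v) {f : k⟦X⟧}
    (hf : (X : k⟦X⟧) • f • w = 0) : ∃ a : k, f • w = a • v := by
  by_cases hdvd : X ^ E ∣ f
  · obtain ⟨h, rfl⟩ := hdvd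
    refine ⟨b * constantCoeff h, ?_⟩
    rw [mul_comm, mul_smul, hw, smul_comm, smul_eq_constantCoeff_smul hXv, smul_smul]
  · have hf0 : f ≠ 0 := by rintro rfl; exact hdvd (dvd_zero _)
    obtain ⟨t, u, rfl⟩ := IsDiscreteValuationRing.eq_unit_mul_pow_irreducible hf0 X_irreducible
    have htE : t + 1 ≤ E := by
      by_contra! h
      exact hdvd ((pow_dvd_pow X (Nat.le_of_lt_succ h)).mul_left _)
    have hkill : (X : k⟦X⟧) ^ (t + 1) • w = 0 := by
      calc (X : k⟦X⟧) ^ (t + 1) • w = (↑u⁻¹ : k⟦X⟧) • X • ((u : k⟦X⟧) * X ^ t) • w := by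
            rw [smul_smul, smul_smul, mul_left_comm, ← mul_assoc, ← mul_assoc, Units.mul_inv,
              one_mul, pow_succ']
        _ = 0 := by rw [hf, smul_zero]
    refine absurd ?_ (smul_ne_zero hb hv)
    rw [← hw, ← Nat.sub_add_cancel htE, pow_add, mul_smul, hkill, smul_zero]

theorem mem_of_smul_eq_smul {N : Submodule k⟦X⟧ π} {w x : π} {f : k⟦X⟧} {b : k} (hb : b ≠ 0)
    (hw : w ∈ N) (h : f • w = b • x) : x ∈ N := by
  rw [← inv_smul_smul₀ hb x, ← h]
  exact smul_of_tower_mem _ _ (smul_mem _ _ hw)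

section Chain

variable {g : ℕ → π} {a : ℕ → ℕ} {b : ℕ → k}

theorem exists_mem_span_singleton_of_mem_span_range (hb : ∀ m, b m ≠ 0)
    (hrel : ∀ m, (X : k⟦X⟧) ^ a m • g (m + 1) = b m • g m) {u : π}
    (hu : u ∈ span k⟦X⟧ (Set.range g)) : ∃ M, u ∈ k⟦X⟧ ∙ g M := by
  have hmono : Monotone fun M => k⟦X⟧ ∙ g M := monotone_nat_of_le_succ fun M =>
    (span_singleton_le_iff_mem _ _).mpr
      (mem_of_smul_eq_smul (hb M) (mem_span_singleton_self _) (hrel M))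
  refine (mem_iSup_of_directed _ hmono.directed_le).mp (span_le.mpr ?_ hu)
  rintro _ ⟨M, rfl⟩
  exact mem_iSup_of_mem M (mem_span_singleton_self _)

theorem X_pow_sum_smul_eq_prod_smul (hrel : ∀ m, (X : k⟦X⟧) ^ a m • g (m + 1) = b m • g m)
    (M : ℕ) : (X : k⟦X⟧) ^ (∑ m ∈ Finset.range M, a m) • g M
      = (∏ m ∈ Finset.range M, b m) • g 0 := by
  induction M with
  | zero => simp
  | succ M ih =>
    rw [Finset.sum_range_succ, Finset.prod_range_succ, pow_add, mul_smul, hrel, smul_comm, ih,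
      smul_smul, mul_comm]

theorem exists_X_pow_smul_eq_zero_of_mem_span_range (hb : ∀ m, b m ≠ 0)
    (hrel : ∀ m, (X : k⟦X⟧) ^ a m • g (m + 1) = b m • g m) (hX : (X : k⟦X⟧) • g 0 = 0)
    {u : π} (hu : u ∈ span k⟦X⟧ (Set.range g)) : ∃ d, (X : k⟦X⟧) ^ d • u = 0 := by
  obtain ⟨M, hM⟩ := exists_mem_span_singleton_of_mem_span_range hb hrel hu
  obtain ⟨f, rfl⟩ := mem_span_singleton.mp hM
  refine ⟨(∑ m ∈ Finset.range M, a m) + 1, ?_⟩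
  rw [smul_comm, pow_succ', mul_smul, X_pow_sum_smul_eq_prod_smul hrel,
    smul_comm (X : k⟦X⟧) (_ : k), hX, smul_zero, smul_zero]

theorem exists_eq_smul_of_mem_span_range (hb : ∀ m, b m ≠ 0)
    (hrel : ∀ m, (X : k⟦X⟧) ^ a m • g (m + 1) = b m • g m) (hg0 : g 0 ≠ 0)
    (hX : (X : k⟦X⟧) • g 0 = 0) {u : π} (hu : u ∈ span k⟦X⟧ (Set.range g))
    (hXu : (X : k⟦X⟧) • u = 0) : ∃ c : k, u = c • g 0 := by
  obtain ⟨M, hM⟩ := exists_mem_span_singleton_of_mem_span_range hb hrel hu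
  obtain ⟨f, rfl⟩ := mem_span_singleton.mp hM
  exact exists_smul_eq_of_X_smul_eq_zero (Finset.prod_ne_zero_iff.mpr fun m _ => hb m)
    hg0 hX (X_pow_sum_smul_eq_prod_smul hrel M) hXu

end Chain

end Torsion

section Independence

variable {R k M ι : Type*} [Ring R] [Ring k] [AddCommGroup M] [Module R M] [Module k M]
  {x : R} {P : ι → Submodule R M} {v : ι → M}

theorem smul_eq_zero_of_smul_sum_eq_zero
    (hv : LinearIndependent k v) (htors : ∀ l, ∀ u ∈ P l, x • u = 0 → ∃ a : k, u = a • v l)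
    {s : Finset ι} {t : ι → M} (ht : ∀ l ∈ s, t l ∈ P l) (hsum : x • ∑ l ∈ s, t l = 0)
    (D : ℕ) (hD : ∀ l ∈ s, x ^ (D + 1) • t l = 0) : ∀ l ∈ s, x • t l = 0 := by
  induction D with
  | zero => simpa using hD
  | succ D ih =>
    refine ih fun l hl => ?_
    have hx : ∀ l ∈ s, x • x ^ (D + 1) • t l = 0 := fun l hl => by
      rw [smul_smul, ← pow_succ', hD l hl]
    choose! a ha using fun l hl => htors l _ (smul_mem _ _ (ht l hl)) (hx l hl)
    have hzero : ∑ l ∈ s, a l • v l = 0 := by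
      rw [← Finset.sum_congr rfl ha, ← Finset.smul_sum, pow_succ, mul_smul, hsum, smul_zero]
    rw [ha l hl, linearIndependent_iff'.mp hv s a hzero l hl, zero_smul]

theorem exists_eq_smul_of_smul_sum_eq_zero
    (hv : LinearIndependent k v) (hpow : ∀ l, ∀ u ∈ P l, ∃ d : ℕ, x ^ d • u = 0)
    (htors : ∀ l, ∀ u ∈ P l, x • u = 0 → ∃ a : k, u = a • v l)
    {s : Finset ι} {t : ι → M} (ht : ∀ l ∈ s, t l ∈ P l) (hsum : x • ∑ l ∈ s, t l = 0) :
    ∀ l ∈ s, ∃ a : k, t l = a • v l := by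
  have hev : ∀ᶠ D in Filter.atTop, ∀ l ∈ s, x ^ D • t l = 0 := by
    refine (Filter.eventually_all_finset s).mpr fun l hl => ?_
    obtain ⟨d, hd⟩ := hpow l _ (ht l hl)
    refine Filter.eventually_atTop.mpr ⟨d, fun D hD => ?_⟩
    rw [← Nat.sub_add_cancel hD, pow_add, mul_smul, hd, smul_zero]
  obtain ⟨D, hD⟩ := hev.exists
  have hD' : ∀ l ∈ s, x ^ (D + 1) • t l = 0 := fun l hl => by
    rw [pow_succ', mul_smul, hD l hl, smul_zero]
  exact fun l hl =>
    htors l _ (ht l hl) (smul_eq_zero_of_smul_sum_eq_zero hv htors ht hsum D hD' l hl)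

theorem iSupIndep_of_linearIndependent
    (hv : LinearIndependent k v) (hpow : ∀ l, ∀ u ∈ P l, ∃ d : ℕ, x ^ d • u = 0)
    (htors : ∀ l, ∀ u ∈ P l, x • u = 0 → ∃ a : k, u = a • v l) : iSupIndep P := by
  refine (iSupIndep_iff_finsetSum_eq_zero_imp_eq_zero P).mpr fun s t ht hsum => ?_
  choose! a ha using
    exists_eq_smul_of_smul_sum_eq_zero hv hpow htors ht (by rw [hsum, smul_zero])
  have hzero : ∑ l ∈ s, a l • v l = 0 := by rw [← Finset.sum_congr rfl ha, hsum]
  intro l hl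
  rw [ha l hl, linearIndependent_iff'.mp hv s a hzero l hl, zero_smul]

theorem exists_eq_sum_smul_of_mem_iSup [Fintype ι]
    (hv : LinearIndependent k v) (hpow : ∀ l, ∀ u ∈ P l, ∃ d : ℕ, x ^ d • u = 0)
    (htors : ∀ l, ∀ u ∈ P l, x • u = 0 → ∃ a : k, u = a • v l) {w : M} (hw : w ∈ ⨆ l, P l)
    (hxw : x • w = 0) : ∃ a : ι → k, w = ∑ l, a l • v l := by
  rw [show (⨆ l, P l) = ⨆ l ∈ Finset.univ, P l by simp, mem_iSup_finset_iff_exists_sum] at hw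
  obtain ⟨t, rfl⟩ := hw
  choose a ha using exists_eq_smul_of_smul_sum_eq_zero hv hpow htors
    (fun l _ => (t l).2) hxw
  exact ⟨fun l => a l (Finset.mem_univ l), Finset.sum_congr rfl ha⟩

end Independence

section Frobenius

variable {k π : Type*} [Field k] [AddCommGroup π] [Module k⟦X⟧ π] [Module k π]
  [IsScalarTower k k⟦X⟧ π] {p : ℕ} {φ : k⟦X⟧ →+* k⟦X⟧} {F : π →+ π}

theorem X_pow_smul_iterate_eq_of_X_pow_smul_eq (hφX : φ X = X ^ p)
    (hφC : ∀ c : k, φ (C c) = C c) (hF : ∀ (f : k⟦X⟧) (w : π), F (f • w) = φ f • F w)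
    {w x : π} {a : ℕ} {b : k} (h : (X : k⟦X⟧) ^ a • w = b • x) (j : ℕ) :
    (X : k⟦X⟧) ^ (a * p ^ j) • (⇑F)^[j] w = b • (⇑F)^[j] x := by
  induction j with
  | zero => simpa using h
  | succ j ih =>
    have := congrArg F ih
    rwa [hF, ← C_smul_eq_smul, hF, hφC, C_smul_eq_smul, map_pow, hφX, ← pow_mul, mul_left_comm,
      ← pow_succ', ← iterate_succ_apply' (⇑F), ← iterate_succ_apply' (⇑F)] at this

variable {n : ℕ} {v : ZMod n → π} {s : ZMod n → ℕ} {c : ZMod n → k}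

theorem exists_X_pow_smul_iterate_eq (hφX : φ X = X ^ p) (hφC : ∀ c : k, φ (C c) = C c)
    (hF : ∀ (f : k⟦X⟧) (w : π), F (f • w) = φ f • F w) (hc : ∀ i, c i ≠ 0)
    (hcyc : ∀ i, (X : k⟦X⟧) ^ s i • F (v i) = C (c i) • v (i + 1)) (l : ZMod n) (j : ℕ) :
    ∃ (A : ℕ) (B : k), B ≠ 0 ∧ (X : k⟦X⟧) ^ A • (⇑F)^[j] (v l) = B • v (l + j) := by
  induction j with
  | zero => exact ⟨0, 1, one_ne_zero, by simp⟩
  | succ j ih =>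
    obtain ⟨A, B, hB, h⟩ := ih
    refine ⟨s (l + j) + A * p, B * c (l + j), mul_ne_zero hB (hc _), ?_⟩
    have hF1 := X_pow_smul_iterate_eq_of_X_pow_smul_eq hφX hφC hF h 1
    rw [pow_one, iterate_one] at hF1
    rw [pow_add, mul_smul, iterate_succ_apply', hF1, smul_comm, hcyc, C_smul_eq_smul, smul_smul,
      Nat.cast_succ, add_assoc]

theorem exists_X_pow_smul_iterate_mul_succ_eq (hφX : φ X = X ^ p)
    (hφC : ∀ c : k, φ (C c) = C c) (hF : ∀ (f : k⟦X⟧) (w : π), F (f • w) = φ f • F w)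
    (hc : ∀ i, c i ≠ 0) (hcyc : ∀ i, (X : k⟦X⟧) ^ s i • F (v i) = C (c i) • v (i + 1))
    (l : ZMod n) : ∃ (e : ℕ) (B : k), B ≠ 0 ∧ ∀ m, (X : k⟦X⟧) ^ (e * p ^ (n * m))
      • (⇑F)^[n * (m + 1)] (v l) = B • (⇑F)^[n * m] (v l) := by
  obtain ⟨e, B, hB, h⟩ := exists_X_pow_smul_iterate_eq hφX hφC hF hc hcyc l n
  rw [ZMod.natCast_self, add_zero] at h
  refine ⟨e, B, hB, fun m => ?_⟩
  rw [mul_add_one, iterate_add_apply]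
  exact X_pow_smul_iterate_eq_of_X_pow_smul_eq hφX hφC hF h (n * m)

theorem exists_iterate_mem_span_iterate_mul [NeZero n] (hφX : φ X = X ^ p)
    (hφC : ∀ c : k, φ (C c) = C c) (hF : ∀ (f : k⟦X⟧) (w : π), F (f • w) = φ f • F w)
    (hc : ∀ i, c i ≠ 0) (hcyc : ∀ i, (X : k⟦X⟧) ^ s i • F (v i) = C (c i) • v (i + 1))
    (j : ZMod n) (m : ℕ) :
    ∃ l, (⇑F)^[m] (v j) ∈ span k⟦X⟧ (Set.range fun q => (⇑F)^[n * q] (v l)) := by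
  -- walk back `(n - 1) * m` steps from `j`, so that `m` more steps give a multiple of `n`
  obtain ⟨A, B, hB, h⟩ :=
    exists_X_pow_smul_iterate_eq hφX hφC hF hc hcyc (j - ((n - 1) * m : ℕ)) ((n - 1) * m)
  rw [sub_add_cancel] at h
  have h' := X_pow_smul_iterate_eq_of_X_pow_smul_eq hφX hφC hF h m
  rw [← iterate_add_apply, ← one_add_mul, Nat.add_sub_of_le NeZero.one_le, mul_comm] at h'
  exact ⟨_, mem_of_smul_eq_smul hB (subset_span ⟨m, rfl⟩) h'⟩

end Frobenius

theorem statement11_general (p : ℕ) (k : Type*) [Field k]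
    (π : Type*) [AddCommGroup π] [Module (PowerSeries k) π]
    [Module k π] [IsScalarTower k (PowerSeries k) π]
    (φ : PowerSeries k →+* PowerSeries k)
    (hφX : φ PowerSeries.X = PowerSeries.X ^ p)
    (hφC : ∀ cc : k, φ (PowerSeries.C cc) = PowerSeries.C cc)
    (F : π →+ π) (hF : ∀ (f : PowerSeries k) (w : π), F (f • w) = φ f • F w)
    (n : ℕ) [NeZero n]
    (v : ZMod n → π) (hv : LinearIndependent k v)
    (hX : ∀ i, (PowerSeries.X : PowerSeries k) • v i = 0)
    (s : ZMod n → ℕ) (c : ZMod n → k) (hc : ∀ i, c i ≠ 0)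
    (hcyc : ∀ i, ((PowerSeries.X : PowerSeries k) ^ s i) • F (v i)
      = PowerSeries.C (c i) • v (i + 1)) :
    let πi : ZMod n → Submodule (PowerSeries k) π := fun i =>
      sInf {N | v i ∈ N ∧ ∀ w ∈ N, (⇑F)^[n] w ∈ N}
    let πM : Submodule (PowerSeries k) π :=
      sInf {N | (∀ j, v j ∈ N) ∧ ∀ w ∈ N, F w ∈ N}
    (∀ i, ∀ w ∈ πi i, (PowerSeries.X : PowerSeries k) • w = 0 → ∃ cc : k, w = cc • v i) ∧
    (πM = ⨆ j, πi j) ∧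
    (∀ j, Disjoint (πi j) (⨆ l ∈ {l : ZMod n | l ≠ j}, πi l)) ∧
    (∀ w ∈ πM, (PowerSeries.X : PowerSeries k) • w = 0 →
      ∃ coef : ZMod n → k, w = ∑ j : ZMod n, coef j • v j) := by
  intro πi πM
  have hπi (l : ZMod n) : πi l = span k⟦X⟧ (Set.range fun m => (⇑F)^[n * m] (v l)) := by
    simpa only [Set.singleton_subset_iff, SetLike.mem_coe, Set.image_singleton,
      Set.iUnion_singleton_eq_range, ← iterate_mul] using
      sInf_stable_eq_span_iterate_image (iterate_map_zero F n) (iterate_map_add F n)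
        (iterate_map_smul_of_semilinear hF n) {v l}
  have hπM : πM = span k⟦X⟧ (⋃ m, (⇑F)^[m] '' Set.range v) := by
    simpa only [Set.range_subset_iff, SetLike.mem_coe] using
      sInf_stable_eq_span_iterate_image F.map_zero F.map_add hF (Set.range v)
  have hpow (l : ZMod n) (u : π) (hu : u ∈ πi l) : ∃ d : ℕ, (X : k⟦X⟧) ^ d • u = 0 := by
    obtain ⟨e, B, hB, hrel⟩ := exists_X_pow_smul_iterate_mul_succ_eq hφX hφC hF hc hcyc l
    exact exists_X_pow_smul_eq_zero_of_mem_span_range (g := fun m => (⇑F)^[n * m] (v l))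
      (fun _ => hB) hrel (hX l) (hπi l ▸ hu)
  have htors (l : ZMod n) (u : π) (hu : u ∈ πi l) (hXu : (X : k⟦X⟧) • u = 0) :
      ∃ a : k, u = a • v l := by
    obtain ⟨e, B, hB, hrel⟩ := exists_X_pow_smul_iterate_mul_succ_eq hφX hφC hF hc hcyc l
    exact exists_eq_smul_of_mem_span_range (g := fun m => (⇑F)^[n * m] (v l))
      (fun _ => hB) hrel (hv.ne_zero l) (hX l) (hπi l ▸ hu) hXu
  have hπM_eq : πM = ⨆ l, πi l := by
    refine le_antisymm ?_ (iSup_le fun l => ?_)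
    · rw [hπM, span_le]
      rintro _ ⟨_, ⟨m, rfl⟩, _, ⟨j, rfl⟩, rfl⟩
      obtain ⟨l, hl⟩ := exists_iterate_mem_span_iterate_mul hφX hφC hF hc hcyc j m
      exact mem_iSup_of_mem l (hπi l ▸ hl)
    · rw [hπi, hπM]
      exact span_mono <| Set.range_subset_iff.mpr fun m =>
        Set.mem_iUnion.mpr ⟨n * m, _, ⟨l, rfl⟩, rfl⟩
  refine ⟨htors, hπM_eq, iSupIndep_def.mp (iSupIndep_of_linearIndependent hv hpow htors), ?_⟩
  intro w hw hXw
  exact exists_eq_sum_smul_of_mem_iSup hv hpow htors (hπM_eq ▸ hw) hXw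

/-- Basic Lemma (torsion computation).  Let `k` be a field of characteristic `p`, and `π` a
module over the twisted ring `k[[X]][F]` (encoded as: a `k[[X]]`-module with an additive map
`F` semilinear over the Frobenius substitution `φ`, `φ(X) = X^p`).  Given linearly independent
`v i` (`i ∈ ℤ/n`) killed by `X` and satisfying the cycling relations
`X^{s i} • F (v i) = c i • v (i+1)`, set `π_i = k[[X]][F^n]·v_i` and `π_M = k[[X]][F]·(⊕ k v_i)`
(smallest suitably stable submodules).  Then the `X`-torsion of `π_i` is `k·v_i`, and
`π_M = ⊕ π_i` as `k[[X]][F^n]`-modules, with `π_M[X] = ⊕ k·v_i`. -/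
theorem statement11 (p : ℕ) [Fact p.Prime] (k : Type*) [Field k] [CharP k p]
    (π : Type*) [AddCommGroup π] [Module (PowerSeries k) π]
    [Module k π] [IsScalarTower k (PowerSeries k) π]
    (φ : PowerSeries k →+* PowerSeries k)
    (hφX : φ PowerSeries.X = PowerSeries.X ^ p)
    (hφC : ∀ cc : k, φ (PowerSeries.C cc) = PowerSeries.C cc)
    (F : π →+ π) (hF : ∀ (f : PowerSeries k) (w : π), F (f • w) = φ f • F w)
    (n : ℕ) [NeZero n]
    (v : ZMod n → π) (hv : LinearIndependent k v)
    (hX : ∀ i, (PowerSeries.X : PowerSeries k) • v i = 0)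
    (s : ZMod n → ℕ) (c : ZMod n → k) (hc : ∀ i, c i ≠ 0)
    (hcyc : ∀ i, ((PowerSeries.X : PowerSeries k) ^ s i) • F (v i)
      = PowerSeries.C (c i) • v (i + 1)) :
    let πi : ZMod n → Submodule (PowerSeries k) π := fun i =>
      sInf {N | v i ∈ N ∧ ∀ w ∈ N, (⇑F)^[n] w ∈ N}
    let πM : Submodule (PowerSeries k) π :=
      sInf {N | (∀ j, v j ∈ N) ∧ ∀ w ∈ N, F w ∈ N}
    (∀ i, ∀ w ∈ πi i, (PowerSeries.X : PowerSeries k) • w = 0 → ∃ cc : k, w = cc • v i) ∧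
    (πM = ⨆ j, πi j) ∧
    (∀ j, Disjoint (πi j) (⨆ l ∈ {l : ZMod n | l ≠ j}, πi l)) ∧
    (∀ w ∈ πM, (PowerSeries.X : PowerSeries k) • w = 0 →
      ∃ coef : ZMod n → k, w = ∑ j : ZMod n, coef j • v j) :=
  statement11_general p k π φ hφX hφC F hF n v hv hX s c hc hcyc
end

section
/- Let k be an algebraically closed field of characteristic p. In the algebra H(1) (central invertible T = T_{2,2}, S₀ = S_{0,0} with S₀² = -S₀, S₁ = S_{0,2} with S₁² = 0), for λ ∈ k: if λ ≠ 0, the cokernel of the central element Ζ - λ (where Ζ = S₀S₁+S₁S₀+S₁) acting on the right ideal S₁·H(1)/(T-1) is a 2-dimensional simple module, isomorphic to the principal module PS(λ,1); if λ = 0, the cokernel is the direct sum of the two 1-dimensional supersingular characters SS(0,1) ⊕ SS(-1,1). -/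
/-!
Because `S₁² = 0`, `(Ζ - λ)·S₁ = e` with `e = S₁S₀S₁ - λS₁` (`rel` in names), so `N` is the
principal right ideal `e·A`. Modulo `e·A` one has `(S₁S₀)^m S₁ ≡ λ^m S₁`, while `S₁` kills every
basis word beginning with `S₁`; so `S₁·A ⊆ kS₁ + kS₁S₀ + e·A`. Conversely `e` sends each basis word
to `0` or to a difference `w(n+1, j) - λ w(n, j)` along one of the chains `(S₁S₀)^{n+1}`,
`(S₁S₀)^n S₁`, so the functionals `Σₙ λⁿ [(S₁S₀)^n S₁]` and `Σₙ λⁿ [(S₁S₀)^{n+1}]` vanish on `e·A`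
and separate `S₁` from `S₁S₀`. For `λ ≠ 0` every nonzero class `c[S₁] + d[S₁S₀]` generates the
cokernel: multiply by `c⁻¹` if `d = 0`, and by `(dλ)⁻¹ S₁` otherwise, since `S₁S₀S₁ ≡ λS₁`.
-/

section PrincipalRightIdeal

variable (k : Type*) {A : Type*} [CommRing k] [Ring A] [Algebra k A]

def principalRightIdeal (e : A) : Submodule k A :=
  LinearMap.range (LinearMap.mulLeft k e)

variable {k}

theorem mul_mem_principalRightIdeal (e a : A) : e * a ∈ principalRightIdeal k e :=
  ⟨a, rfl⟩

theorem principalRightIdeal.mul_mem_right {e x : A} (hx : x ∈ principalRightIdeal k e) (b : A) :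
    x * b ∈ principalRightIdeal k e := by
  obtain ⟨a, rfl⟩ := hx
  exact ⟨a * b, (mul_assoc e a b).symm⟩

end PrincipalRightIdeal

namespace HeckeH1

section CommRing

variable {k A : Type*} [CommRing k] [Ring A] [Algebra k A] {S₀ S₁ : A}

def h1Word (S₀ S₁ : A) : Unit ⊕ ℕ × Fin 4 → A :=
  Sum.elim (fun _ => 1) fun mj =>
    ![(S₀ * S₁) ^ (mj.1 + 1), (S₁ * S₀) ^ (mj.1 + 1), (S₀ * S₁) ^ mj.1 * S₀,
      (S₁ * S₀) ^ mj.1 * S₁] mj.2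

theorem S₁_mul_S₁S₀_pow_succ (hS1 : S₁ * S₁ = 0) (m : ℕ) : S₁ * (S₁ * S₀) ^ (m + 1) = 0 := by
  rw [pow_succ', ← mul_assoc, ← mul_assoc, hS1, zero_mul, zero_mul]

theorem S₁_mul_S₁S₀_pow_mul_S₁ (hS1 : S₁ * S₁ = 0) (m : ℕ) :
    S₁ * ((S₁ * S₀) ^ m * S₁) = 0 := by
  rw [mul_pow_mul, ← mul_assoc, hS1, zero_mul]

theorem zeta_sub_mul_S₁_mul (hS1 : S₁ * S₁ = 0) (lam : k) (a : A) :
    (S₀ * S₁ + S₁ * S₀ + S₁ - algebraMap k A lam) * (S₁ * a) = (S₁ * S₀ * S₁ - lam • S₁) * a := by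
  simp only [sub_mul, add_mul, mul_assoc, ← mul_assoc S₁ S₁, hS1, zero_mul, mul_zero,
    zero_add, add_zero, Algebra.smul_def, Algebra.commutes]

theorem rel_mul_S₀S₁_pow (S₀ S₁ : A) (lam : k) (m : ℕ) :
    (S₁ * S₀ * S₁ - lam • S₁) * (S₀ * S₁) ^ m
      = (S₁ * S₀) ^ (m + 1) * S₁ - lam • ((S₁ * S₀) ^ m * S₁) := by
  rw [sub_mul, smul_mul_assoc, ← mul_pow_mul, mul_assoc (S₁ * S₀) S₁, ← mul_pow_mul, ← mul_assoc,
    ← pow_succ']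

theorem S₁S₀_pow_mul_S₁_sub_mem (S₀ S₁ : A) (lam : k) (m : ℕ) :
    (S₁ * S₀) ^ m * S₁ - lam ^ m • S₁ ∈ principalRightIdeal k (S₁ * S₀ * S₁ - lam • S₁) := by
  induction m with
  | zero => simp
  | succ m ih =>
    have h : (S₁ * S₀) ^ (m + 1) * S₁ - lam ^ (m + 1) • S₁
        = (S₁ * S₀ * S₁ - lam • S₁) * (S₀ * S₁) ^ m
          + lam • ((S₁ * S₀) ^ m * S₁ - lam ^ m • S₁) := by
      rw [rel_mul_S₀S₁_pow, pow_succ']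
      module
    rw [h]
    exact add_mem (mul_mem_principalRightIdeal _ _) (Submodule.smul_mem _ _ ih)

theorem S₁_mul_h1Word_mem (hS1 : S₁ * S₁ = 0) (lam : k) (i : Unit ⊕ ℕ × Fin 4) :
    S₁ * h1Word S₀ S₁ i ∈ principalRightIdeal k (S₁ * S₀ * S₁ - lam • S₁)
      ⊔ Submodule.span k {S₁, S₁ * S₀} := by
  have mem_sup {x v : A} (c : k) (hx : x - c • v ∈ principalRightIdeal k (S₁ * S₀ * S₁ - lam • S₁))
      (hv : v ∈ Submodule.span k {S₁, S₁ * S₀}) :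
      x ∈ principalRightIdeal k (S₁ * S₀ * S₁ - lam • S₁) ⊔ Submodule.span k {S₁, S₁ * S₀} :=
    Submodule.mem_sup.2 ⟨_, hx, _, Submodule.smul_mem _ c hv, sub_add_cancel x _⟩
  have hS₁ : S₁ ∈ Submodule.span k {S₁, S₁ * S₀} := Submodule.subset_span (by simp)
  have hS₁S₀ : S₁ * S₀ ∈ Submodule.span k {S₁, S₁ * S₀} := Submodule.subset_span (by simp)
  rcases i with _ | ⟨m, j⟩
  · exact Submodule.mem_sup_right (by simpa [h1Word] using hS₁)
  fin_cases j
  · refine mem_sup (lam ^ (m + 1)) ?_ hS₁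
    simpa [h1Word, ← mul_pow_mul] using S₁S₀_pow_mul_S₁_sub_mem S₀ S₁ lam (m + 1)
  · simp [h1Word, S₁_mul_S₁S₀_pow_succ hS1]
  · refine mem_sup (lam ^ m) ?_ hS₁S₀
    have h := principalRightIdeal.mul_mem_right (S₁S₀_pow_mul_S₁_sub_mem S₀ S₁ lam m) S₀
    simpa [h1Word, ← mul_assoc, ← mul_pow_mul, sub_mul] using h
  · simp [h1Word, S₁_mul_S₁S₀_pow_mul_S₁ hS1]

theorem exists_S₁_mul_sub_mem (hS1 : S₁ * S₁ = 0)
    (hspan : Submodule.span k (Set.range (h1Word S₀ S₁)) = ⊤) (lam : k) (a : A) :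
    ∃ c d : k, S₁ * a - (c • S₁ + d • (S₁ * S₀))
      ∈ principalRightIdeal k (S₁ * S₀ * S₁ - lam • S₁) := by
  have hle : Submodule.span k (Set.range (h1Word S₀ S₁))
      ≤ (principalRightIdeal k (S₁ * S₀ * S₁ - lam • S₁) ⊔ Submodule.span k {S₁, S₁ * S₀}).comap
        (LinearMap.mulLeft k S₁) :=
    Submodule.span_le.2 (Set.range_subset_iff.2 (S₁_mul_h1Word_mem hS1 lam))
  obtain ⟨y, hy, z, hz, hyz⟩ := Submodule.mem_sup.1 (hle (hspan ▸ Submodule.mem_top (x := a)))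
  obtain ⟨c, d, rfl⟩ := Submodule.mem_span_pair.1 hz
  refine ⟨c, d, ?_⟩
  rw [LinearMap.mulLeft_apply] at hyz
  rwa [← hyz, add_sub_cancel_right]

theorem rel_mul_h1Word (hS1 : S₁ * S₁ = 0) (lam : k) (i : Unit ⊕ ℕ × Fin 4) :
    (S₁ * S₀ * S₁ - lam • S₁) * h1Word S₀ S₁ i = 0 ∨
      ∃ n j, (S₁ * S₀ * S₁ - lam • S₁) * h1Word S₀ S₁ i
        = h1Word S₀ S₁ (.inr (n + 1, j)) - lam • h1Word S₀ S₁ (.inr (n, j)) := by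
  rcases i with _ | ⟨m, j⟩
  · exact .inr ⟨0, 3, by simp [h1Word]⟩
  fin_cases j
  · exact .inr ⟨m + 1, 3, by simpa [h1Word] using rel_mul_S₀S₁_pow S₀ S₁ lam (m + 1)⟩
  · exact .inl (by simp [h1Word, sub_mul, mul_assoc, S₁_mul_S₁S₀_pow_succ hS1])
  · refine .inr ⟨m, 1, ?_⟩
    change (S₁ * S₀ * S₁ - lam • S₁) * ((S₀ * S₁) ^ m * S₀)
      = (S₁ * S₀) ^ (m + 1 + 1) - lam • (S₁ * S₀) ^ (m + 1)
    rw [← mul_assoc, rel_mul_S₀S₁_pow, sub_mul, smul_mul_assoc, mul_assoc _ S₁ S₀,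
      mul_assoc _ S₁ S₀, ← pow_succ, ← pow_succ]
  · exact .inl (by simp [h1Word, sub_mul, mul_assoc, S₁_mul_S₁S₀_pow_mul_S₁ hS1])

theorem exists_functional_vanishing_on_rel (hS1 : S₁ * S₁ = 0)
    (hli : LinearIndependent k (h1Word S₀ S₁))
    (hspan : Submodule.span k (Set.range (h1Word S₀ S₁)) = ⊤) (lam c d : k) :
    ∃ φ : A →ₗ[k] k, φ S₁ = c ∧ φ (S₁ * S₀) = d ∧
      principalRightIdeal k (S₁ * S₀ * S₁ - lam • S₁) ≤ LinearMap.ker φ := by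
  let w : Unit ⊕ ℕ × Fin 4 → k := Sum.elim 0 fun nj => lam ^ nj.1 * ![0, d, 0, c] nj.2
  set φ := (Module.Basis.mk hli hspan.ge).constr k w
  have hφ (i) : φ (h1Word S₀ S₁ i) = w i := by
    simpa using (Module.Basis.mk hli hspan.ge).constr_basis k _ i
  refine ⟨φ, by simpa [h1Word, w] using hφ (.inr (0, 3)),
    by simpa [h1Word, w] using hφ (.inr (0, 1)), ?_⟩
  rintro _ ⟨a, rfl⟩
  have h : φ ∘ₗ LinearMap.mulLeft k (S₁ * S₀ * S₁ - lam • S₁) = 0 := by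
    refine LinearMap.ext_on_range hspan fun i => ?_
    rcases rel_mul_h1Word (S₀ := S₀) hS1 lam i with h | ⟨n, j, h⟩
    · simp [h]
    · simp [h, hφ, w, pow_succ]
      ring
  exact LinearMap.congr_fun h a

theorem eq_zero_of_smul_add_smul_mem (hS1 : S₁ * S₁ = 0)
    (hli : LinearIndependent k (h1Word S₀ S₁))
    (hspan : Submodule.span k (Set.range (h1Word S₀ S₁)) = ⊤) {lam c d : k}
    (h : c • S₁ + d • (S₁ * S₀) ∈ principalRightIdeal k (S₁ * S₀ * S₁ - lam • S₁)) :
    c = 0 ∧ d = 0 := by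
  obtain ⟨φ₁, h₁S₁, h₁S₁S₀, h₁⟩ := exists_functional_vanishing_on_rel hS1 hli hspan lam 1 0
  obtain ⟨φ₂, h₂S₁, h₂S₁S₀, h₂⟩ := exists_functional_vanishing_on_rel hS1 hli hspan lam 0 1
  constructor
  · simpa [h₁S₁, h₁S₁S₀] using h₁ h
  · simpa [h₂S₁, h₂S₁S₀] using h₂ h

theorem supersingular_mem (hS0 : S₀ * S₀ = -S₀) (hS1 : S₁ * S₁ = 0) :
    (S₁ + S₁ * S₀) * S₀ ∈ principalRightIdeal k (S₁ * S₀ * S₁) ∧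
      (S₁ + S₁ * S₀) * S₁ ∈ principalRightIdeal k (S₁ * S₀ * S₁) ∧
      S₁ * S₀ * S₀ + S₁ * S₀ ∈ principalRightIdeal k (S₁ * S₀ * S₁) ∧
      S₁ * S₀ * S₁ ∈ principalRightIdeal k (S₁ * S₀ * S₁) := by
  have he : S₁ * S₀ * S₁ ∈ principalRightIdeal k (S₁ * S₀ * S₁) := ⟨1, mul_one _⟩
  refine ⟨?_, ?_, ?_, he⟩
  · have h : (S₁ + S₁ * S₀) * S₀ = 0 := by rw [add_mul, mul_assoc, hS0, mul_neg, add_neg_cancel]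
    exact h ▸ zero_mem _
  · rwa [add_mul, hS1, zero_add]
  · have h : S₁ * S₀ * S₀ + S₁ * S₀ = 0 := by rw [mul_assoc, hS0, mul_neg, neg_add_cancel]
    exact h ▸ zero_mem _

end CommRing

section Field

variable {k A : Type*} [Field k] [Ring A] [Algebra k A] {S₀ S₁ : A}

theorem exists_S₁_sub_mul_mem (hS1 : S₁ * S₁ = 0) {lam : k}
    (hlam : lam ≠ 0) {x : A} (hx : x ∉ principalRightIdeal k (S₁ * S₀ * S₁ - lam • S₁)) {c d : k}
    (hxcd : x - (c • S₁ + d • (S₁ * S₀)) ∈ principalRightIdeal k (S₁ * S₀ * S₁ - lam • S₁)) :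
    ∃ s, S₁ - x * s ∈ principalRightIdeal k (S₁ * S₀ * S₁ - lam • S₁) := by
  set I := principalRightIdeal k (S₁ * S₀ * S₁ - lam • S₁)
  suffices h : ∃ s, S₁ - (c • S₁ + d • (S₁ * S₀)) * s ∈ I by
    obtain ⟨s, hs⟩ := h
    refine ⟨s, ?_⟩
    have h := sub_mem hs (principalRightIdeal.mul_mem_right hxcd s)
    rwa [sub_mul, sub_sub_sub_cancel_right] at h
  by_cases hd : d = 0
  · have hc : c ≠ 0 := by
      rintro rfl
      exact hx (by simpa [hd] using hxcd)
    refine ⟨algebraMap k A c⁻¹, ?_⟩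
    rw [hd, zero_smul, add_zero, ← Algebra.commutes, ← Algebra.smul_def, smul_smul,
      inv_mul_cancel₀ hc, one_smul, sub_self]
    exact zero_mem I
  · refine ⟨(d * lam)⁻¹ • S₁, ?_⟩
    have h : S₁ - (c • S₁ + d • (S₁ * S₀)) * ((d * lam)⁻¹ • S₁)
        = (S₁ * S₀ * S₁ - lam • S₁) * algebraMap k A (-lam⁻¹) := by
      simp only [add_mul, smul_mul_assoc, mul_smul_comm, hS1, smul_zero, zero_add, smul_smul,
        ← Algebra.commutes, ← Algebra.smul_def]
      match_scalars <;> field_simp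
    rw [h]
    exact mul_mem_principalRightIdeal _ _

theorem exists_sub_mul_mem_of_S₁_mul_notMem (hS1 : S₁ * S₁ = 0)
    (hspan : Submodule.span k (Set.range (h1Word S₀ S₁)) = ⊤) {lam : k} (hlam : lam ≠ 0) {a : A}
    (ha : S₁ * a ∉ principalRightIdeal k (S₁ * S₀ * S₁ - lam • S₁)) (b : A) :
    ∃ r, S₁ * b - S₁ * a * r ∈ principalRightIdeal k (S₁ * S₀ * S₁ - lam • S₁) := by
  obtain ⟨c, d, hcd⟩ := exists_S₁_mul_sub_mem hS1 hspan lam a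
  obtain ⟨s, hs⟩ := exists_S₁_sub_mul_mem hS1 hlam ha hcd
  refine ⟨s * b, ?_⟩
  simpa [sub_mul, mul_assoc] using principalRightIdeal.mul_mem_right hs b

end Field

end HeckeH1

theorem statement17_general (k : Type*) [Field k]
    (A : Type*) [Ring A] [Algebra k A]
    (S₀ S₁ : A)
    (hS0 : S₀ * S₀ = -S₀) (hS1 : S₁ * S₁ = 0)
    (f : Unit ⊕ ℕ × Fin 4 → A)
    (hfone : f (Sum.inl ()) = 1)
    (hf0 : ∀ m : ℕ, f (Sum.inr (m, 0)) = (S₀ * S₁) ^ (m + 1))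
    (hf1 : ∀ m : ℕ, f (Sum.inr (m, 1)) = (S₁ * S₀) ^ (m + 1))
    (hf2 : ∀ m : ℕ, f (Sum.inr (m, 2)) = (S₀ * S₁) ^ m * S₀)
    (hf3 : ∀ m : ℕ, f (Sum.inr (m, 3)) = (S₁ * S₀) ^ m * S₁)
    (hli : LinearIndependent k f)
    (hspan : Submodule.span k (Set.range f) = ⊤)
    (lam : k) :
    let Zc : A := S₀ * S₁ + S₁ * S₀ + S₁
    let N : Set A := {x : A | ∃ a : A, x = (Zc - algebraMap k A lam) * (S₁ * a)}
    -- the images of `S₁` and `S₁S₀` form a basis of the cokernel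
    ((∀ a : A, ∃ cc dd : k, S₁ * a - (cc • S₁ + dd • (S₁ * S₀)) ∈ N) ∧
     (∀ cc dd : k, (cc • S₁ + dd • (S₁ * S₀)) ∈ N → cc = 0 ∧ dd = 0)) ∧
    -- if `λ ≠ 0`, the cokernel is the simple 2-dimensional principal module `PS(λ,1)`
    (lam ≠ 0 →
      ((S₁ * S₀) * S₁ - lam • S₁ ∈ N) ∧
      ((lam • S₁) * S₀ - lam • (S₁ * S₀) ∈ N) ∧
      (∀ x : A, (∃ a : A, x = S₁ * a) → x ∉ N →
        ∀ y : A, (∃ b : A, y = S₁ * b) → ∃ r : A, y - x * r ∈ N)) ∧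
    -- if `λ = 0`, the cokernel is the direct sum `SS(0,1) ⊕ SS(-1,1)`
    (lam = 0 →
      ((S₁ + S₁ * S₀) * S₀ ∈ N) ∧ ((S₁ + S₁ * S₀) * S₁ ∈ N) ∧
      ((S₁ * S₀) * S₀ + (S₁ * S₀) ∈ N) ∧ ((S₁ * S₀) * S₁ ∈ N)) := by
  intro Zc N
  obtain rfl : f = HeckeH1.h1Word S₀ S₁ := by
    funext i
    rcases i with _ | ⟨m, j⟩
    · exact hfone
    fin_cases j
    exacts [hf0 m, hf1 m, hf2 m, hf3 m]
  have hN : N = principalRightIdeal k (S₁ * S₀ * S₁ - lam • S₁) := by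
    ext x
    simp only [N, Zc, HeckeH1.zeta_sub_mul_S₁_mul hS1, Set.mem_ofPred_eq, SetLike.mem_coe,
      principalRightIdeal, LinearMap.mem_range, LinearMap.mulLeft_apply, eq_comm]
  rw [hN]
  refine ⟨⟨HeckeH1.exists_S₁_mul_sub_mem hS1 hspan lam,
      fun _ _ h => HeckeH1.eq_zero_of_smul_add_smul_mem hS1 hli hspan h⟩,
    fun hlam => ⟨⟨1, mul_one _⟩, ?_, ?_⟩, fun hlam => ?_⟩
  · rw [smul_mul_assoc, sub_self]
    exact zero_mem _
  · rintro _ ⟨a, rfl⟩ ha _ ⟨b, rfl⟩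
    exact HeckeH1.exists_sub_mul_mem_of_S₁_mul_notMem hS1 hspan hlam ha b
  · rw [hlam, zero_smul, sub_zero]
    exact HeckeH1.supersingular_mem hS0 hS1

/-- Cokernel of `Ζ - λ` on the right ideal `S₁·H(1)_{T=1}`.  Here `A` stands for the algebra
`H(1)/(T-1)`: a `k`-algebra with elements `S₀, S₁` satisfying `S₀² = -S₀`, `S₁² = 0` and
`k`-basis `{1, (S₀S₁)^m, (S₁S₀)^m (m ≥ 1), (S₀S₁)^m S₀, (S₁S₀)^m S₁ (m ≥ 0)}`.  Let
`Ζ = S₀S₁ + S₁S₀ + S₁` (central) and let `N = (Ζ - λ)·S₁·A`.  Then the cokernel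
`S₁·A / (Ζ-λ)·S₁·A` has basis the images of `S₁` and `S₁S₀`; if `λ ≠ 0` it is a 2-dimensional
simple right module isomorphic to the principal module `PS(λ,1)` (with basis vectors
`v = [S₁S₀]`, `w = λ[S₁]` satisfying `vS₁ = w`, `wS₀ = λv`), and if `λ = 0` it decomposes as
the direct sum of the two supersingular characters `SS(0,1) ⊕ SS(-1,1)` (spanned by
`u₁ = [S₁ + S₁S₀]` with `u₁S₀ ≡ 0 ≡ u₁S₁` and `u₂ = [S₁S₀]` with `u₂S₀ ≡ -u₂`,
`u₂S₁ ≡ 0`). -/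
theorem statement17 (k : Type*) [Field k] [IsAlgClosed k] (p : ℕ) [Fact p.Prime] [CharP k p]
    (hp : Odd p)
    (A : Type*) [Ring A] [Algebra k A]
    (S₀ S₁ : A)
    (hS0 : S₀ * S₀ = -S₀) (hS1 : S₁ * S₁ = 0)
    (f : Unit ⊕ ℕ × Fin 4 → A)
    (hfone : f (Sum.inl ()) = 1)
    (hf0 : ∀ m : ℕ, f (Sum.inr (m, 0)) = (S₀ * S₁) ^ (m + 1))
    (hf1 : ∀ m : ℕ, f (Sum.inr (m, 1)) = (S₁ * S₀) ^ (m + 1))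
    (hf2 : ∀ m : ℕ, f (Sum.inr (m, 2)) = (S₀ * S₁) ^ m * S₀)
    (hf3 : ∀ m : ℕ, f (Sum.inr (m, 3)) = (S₁ * S₀) ^ m * S₁)
    (hli : LinearIndependent k f)
    (hspan : Submodule.span k (Set.range f) = ⊤)
    (lam : k) :
    let Zc : A := S₀ * S₁ + S₁ * S₀ + S₁
    let N : Set A := {x : A | ∃ a : A, x = (Zc - algebraMap k A lam) * (S₁ * a)}
    -- the images of `S₁` and `S₁S₀` form a basis of the cokernel
    ((∀ a : A, ∃ cc dd : k, S₁ * a - (cc • S₁ + dd • (S₁ * S₀)) ∈ N) ∧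
     (∀ cc dd : k, (cc • S₁ + dd • (S₁ * S₀)) ∈ N → cc = 0 ∧ dd = 0)) ∧
    -- if `λ ≠ 0`, the cokernel is the simple 2-dimensional principal module `PS(λ,1)`
    (lam ≠ 0 →
      ((S₁ * S₀) * S₁ - lam • S₁ ∈ N) ∧
      ((lam • S₁) * S₀ - lam • (S₁ * S₀) ∈ N) ∧
      (∀ x : A, (∃ a : A, x = S₁ * a) → x ∉ N →
        ∀ y : A, (∃ b : A, y = S₁ * b) → ∃ r : A, y - x * r ∈ N)) ∧
    -- if `λ = 0`, the cokernel is the direct sum `SS(0,1) ⊕ SS(-1,1)`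
    (lam = 0 →
      ((S₁ + S₁ * S₀) * S₀ ∈ N) ∧ ((S₁ + S₁ * S₀) * S₁ ∈ N) ∧
      ((S₁ * S₀) * S₀ + (S₁ * S₀) ∈ N) ∧ ((S₁ * S₀) * S₁ ∈ N)) :=
  statement17_general k A S₀ S₁ hS0 hS1 f hfone hf0 hf1 hf2 hf3 hli hspan lam
end
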